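/- arXiv:1602.02993 — 2 statements merged into one kernel-verified Lean document; each statement's English description precedes it below -/
import Mathlib

section
/- (Dominated convergence for gauge integrals) If g₁, g₂, fⱼ are real HK-integrable on a brick I with g₁ ≤ fⱼ ≤ g₂ for all j, and f(P) = lim_{j→∞} fⱼ(P) exists almost everywhere, then f is HK-integrable on I and ∫_I f dμ = lim_{j→∞} ∫_I fⱼ dμ. -/
open Set Filter

/-- A brick (compact non-degenerate interval) in `ι → ℝ`. -/
structure Brick (ι : Type*) [Fintype ι] where
  lower : ι → ℝ
  upper : ι → ℝ
  lt : ∀ j, lower j < upper j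

variable {ι : Type*} [Fintype ι]

namespace Brick

/-- The underlying closed set of a brick. -/
def toSet (I : Brick ι) : Set (ι → ℝ) := {x | ∀ j, x j ∈ Set.Icc (I.lower j) (I.upper j)}

/-- The open interior of a brick. -/
def inter (I : Brick ι) : Set (ι → ℝ) := {x | ∀ j, x j ∈ Set.Ioo (I.lower j) (I.upper j)}

/-- The volume of a brick. -/
noncomputable def vol (I : Brick ι) : ℝ := ∏ j, (I.upper j - I.lower j)

end Brick

/-- A tagged division of a brick `I`: finitely many non-overlapping sub-bricks covering `I`,
each with a tag point belonging to it. -/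
structure TaggedDiv {ι : Type*} [Fintype ι] (I : Brick ι) where
  pieces : Finset (Brick ι × (ι → ℝ))
  subset_of_mem : ∀ p ∈ pieces, (p.1 : Brick ι).toSet ⊆ I.toSet
  tag_mem : ∀ p ∈ pieces, p.2 ∈ (p.1 : Brick ι).toSet
  nonoverlap : ∀ p ∈ pieces, ∀ q ∈ pieces, p ≠ q →
    (p.1 : Brick ι).inter ∩ (q.1 : Brick ι).inter = ∅
  cover : I.toSet = ⋃ p ∈ pieces, (p.1 : Brick ι).toSet

/-- A gauge on a brick: a function positive at each point of the brick. -/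
def IsGauge (I : Brick ι) (δ : (ι → ℝ) → ℝ) : Prop := ∀ x ∈ I.toSet, 0 < δ x

/-- A tagged division is compatible with the gauge `δ` if each brick lies in the open ball
of radius `δ` about its tag. -/
def Compat {I : Brick ι} (D : TaggedDiv I) (δ : (ι → ℝ) → ℝ) : Prop :=
  ∀ p ∈ D.pieces, (p.1 : Brick ι).toSet ⊆ Metric.ball p.2 (δ p.2)

/-- The Riemann sum of `f` over a tagged division. -/
noncomputable def riemannSum {I : Brick ι} (f : (ι → ℝ) → ℝ) (D : TaggedDiv I) : ℝ :=
  ∑ p ∈ D.pieces, f p.2 * (p.1 : Brick ι).vol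

/-- `f` has Henstock–Kurzweil integral `A` on the brick `I`. -/
def HasHK (I : Brick ι) (f : (ι → ℝ) → ℝ) (A : ℝ) : Prop :=
  ∀ ε > 0, ∃ δ : (ι → ℝ) → ℝ, IsGauge I δ ∧
    ∀ D : TaggedDiv I, Compat D δ → |riemannSum f D - A| < ε

open scoped ENNReal Classical

/-- The sum of `|h|` over a tagged division, for an interval-point function `h`. -/
noncomputable def varSum {I : Brick ι} (h : Brick ι → (ι → ℝ) → ℝ) (D : TaggedDiv I) : ℝ :=
  ∑ p ∈ D.pieces, |h p.1 p.2|

/-- The (Henstock) variation of an interval-point function `h` on a brick `I`. -/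
noncomputable def variation (I : Brick ι) (h : Brick ι → (ι → ℝ) → ℝ) : ℝ≥0∞ :=
  ⨅ δ ∈ {δ : (ι → ℝ) → ℝ | IsGauge I δ},
    ⨆ D ∈ {D : TaggedDiv I | Compat D δ}, ENNReal.ofReal (varSum h D)

/-- The variation of `h` on `I` with tags restricted to the set `X`. -/
noncomputable def variationOn (I : Brick ι) (h : Brick ι → (ι → ℝ) → ℝ)
    (X : Set (ι → ℝ)) : ℝ≥0∞ :=
  variation I (fun J P => if P ∈ X then h J P else 0)

/-- The outer measure of a set `X` in the brick `I`, defined via the Henstock variation of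
the volume function restricted to `X`. -/
noncomputable def mustar (I : Brick ι) (X : Set (ι → ℝ)) : ℝ≥0∞ :=
  variationOn I (fun J _ => J.vol) X

/-!
`HasHK I` is Mathlib's Henstock box integral over `I.box`, so the work happens there. The limit
`F` is squeezed between the tail suprema `sup_{k ≥ j} f k` and the tail infima
`inf_{k ≥ j} f k`. These are integrable: a Henstock integrable function dominated by an
integrable one has integrable absolute value (its Riemann sums are close to `∑ |∫_J f|` by
Saks–Henstock), so finite maxima are integrable, and monotone convergence passes to the
supremum. Monotone convergence again shows that the integrals of both envelopes converge to
`∫ F`, and `∫ f j` lies in between. Finally, a function vanishing off a `μ*`-null set has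
integral zero, so redefining `f j` and `F` on `X` reduces everything to convergence everywhere.
-/

open BoxIntegral IntegrationParams Topology

noncomputable def tailSup (u : ℕ → ℝ) (j : ℕ) : ℝ := ⨆ k, u (j + k)

section TailSup

variable {u : ℕ → ℝ}

theorem BddAbove.range_comp_add (hu : BddAbove (Set.range u)) (j : ℕ) :
    BddAbove (Set.range fun k => u (j + k)) :=
  hu.mono (Set.range_subset_iff.2 fun k => Set.mem_range_self (j + k))

theorem le_tailSup (hu : BddAbove (Set.range u)) (j : ℕ) : u j ≤ tailSup u j :=
  le_ciSup (hu.range_comp_add j) 0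

theorem antitone_tailSup (hu : BddAbove (Set.range u)) : Antitone (tailSup u) :=
  antitone_nat_of_succ_le fun j => ciSup_le fun k => by
    have := le_ciSup (hu.range_comp_add j) (k + 1)
    rwa [← add_assoc, add_right_comm] at this

theorem tendsto_partialSups_tailSup (hu : BddAbove (Set.range u)) (j : ℕ) :
    Tendsto (partialSups fun k => u (j + k)) atTop (𝓝 (tailSup u j)) := by
  rw [tailSup, ← ciSup_partialSups_eq (hu.range_comp_add j)]
  exact tendsto_atTop_ciSup (partialSups_monotone _)
    (bddAbove_range_partialSups.2 (hu.range_comp_add j))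

theorem tendsto_tailSup {a : ℝ} (hu : Tendsto u atTop (𝓝 a)) :
    Tendsto (tailSup u) atTop (𝓝 a) := by
  refine tendsto_order.2 ⟨fun b hb => ?_, fun b hb => ?_⟩
  · exact (hu.eventually (lt_mem_nhds hb)).mono fun j hj =>
      hj.trans_le (le_tailSup hu.bddAbove_range j)
  · obtain ⟨c, hac, hcb⟩ := exists_between hb
    obtain ⟨N, hN⟩ := eventually_atTop.1 (hu.eventually (gt_mem_nhds hac))
    exact eventually_atTop.2 ⟨N, fun j hj =>
      (ciSup_le fun k => (hN _ (le_add_right hj)).le).trans_lt hcb⟩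

end TailSup

/-! ### Henstock integrals on boxes -/

namespace BoxIntegral

open MeasureTheory

variable {I : Box ι} {l : IntegrationParams}

theorem TaggedPrepartition.boxes_filter {α : Type*} {J : Box α} (π : TaggedPrepartition J)
    (p : Box α → Prop) [DecidablePred p] : (π.filter p).boxes = π.boxes.filter p :=
  Finset.filter_congr_decidable _ _ _

theorem Box.Icc_eq_inter_of_coe_eq_inf {α : Type*} {P J K : Box α}
    (h : (P : WithBot (Box α)) = ↑J ⊓ ↑K) : Box.Icc P = Box.Icc J ∩ Box.Icc K := by
  have h' : Box.mk' (J.lower ⊔ K.lower) (J.upper ⊓ K.upper) = (P : WithBot (Box α)) := h.symm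
  rw [Box.mk'_eq_coe] at h'
  rw [Box.Icc_def, Box.Icc_def, Box.Icc_def, ← h'.1, ← h'.2, Set.Icc_inter_Icc]

theorem BoxAdditiveMap.sum_abs_le_sum_abs_biUnion {α : Type*} {I : Box α}
    {I₀ : WithTop (Box α)} (F : α →ᵇᵃ[I₀] ℝ) (hI : ↑I ≤ I₀) (π : Prepartition I)
    {πi : ∀ J, Prepartition J} (hπi : ∀ J ∈ π, (πi J).IsPartition) :
    ∑ J ∈ π.boxes, |F J| ≤ ∑ J ∈ (π.biUnion πi).boxes, |F J| := by
  change _ ≤ ∑ J ∈ π.boxes.biUnion fun J => (πi J).boxes, |F J|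
  rw [Prepartition.sum_biUnion_boxes]
  refine Finset.sum_le_sum fun J hJ => ?_
  rw [← F.sum_partition_boxes ((WithTop.coe_le_coe.2 (π.le_of_mem hJ)).trans hI) (hπi J hJ)]
  exact Finset.abs_sum_le_sum_abs _ _

section SaksHenstock

variable {vol : ι →ᵇᵃ (ℝ →L[ℝ] ℝ)}

theorem Integrable.sum_integral_of_isPartition {f : (ι → ℝ) → ℝ} (h : Integrable I l f vol)
    {π : Prepartition I} (hπ : π.IsPartition) :
    ∑ J ∈ π.boxes, integral J l f vol = integral I l f vol := by
  simpa using h.sum_integral_congr (π₂ := ⊤) (by rw [hπ.iUnion_eq, Prepartition.iUnion_top])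

/-- The Saks–Henstock lemma with absolute values, obtained by applying
`Integrable.dist_integralSum_sum_integral_le_of_memBaseSet` separately to the boxes where the
Riemann sum overshoots and to those where it undershoots. -/
theorem Integrable.sum_abs_sub_integral_le_of_memBaseSet {f : (ι → ℝ) → ℝ}
    (h : Integrable I l f vol) {ε : ℝ} (hε : 0 < ε) {c : NNReal} {π : TaggedPrepartition I}
    (hπ : l.MemBaseSet I c (h.convergenceR ε c) π) :
    ∑ J ∈ π.boxes, |vol J (f (π.tag J)) - integral J l f vol| ≤ 2 * ε := by
  set q : Box ι → ℝ := fun J => vol J (f (π.tag J)) - integral J l f vol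
  have hfilter : ∀ (p : Box ι → Prop) [DecidablePred p], |∑ J ∈ π.boxes with p J, q J| ≤ ε := by
    intro p _
    have := h.dist_integralSum_sum_integral_le_of_memBaseSet hε (hπ.filter p)
    rwa [Real.dist_eq, integralSum, ← Finset.sum_sub_distrib,
      TaggedPrepartition.boxes_filter, TaggedPrepartition.filter_tag] at this
  have hpos := abs_le.1 (hfilter fun J => 0 ≤ q J)
  have hneg := abs_le.1 (hfilter fun J => ¬0 ≤ q J)
  have hsplit : ∑ J ∈ π.boxes, |q J| =
      ∑ J ∈ π.boxes with 0 ≤ q J, q J - ∑ J ∈ π.boxes with ¬0 ≤ q J, q J := by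
    rw [← Finset.sum_filter_add_sum_filter_not _ fun J => 0 ≤ q J, sub_eq_add_neg,
      ← Finset.sum_neg_distrib]
    congr 1 <;> refine Finset.sum_congr rfl fun J hJ => ?_
    · exact abs_of_nonneg (Finset.mem_filter.1 hJ).2
    · exact abs_of_neg (not_le.1 (Finset.mem_filter.1 hJ).2)
  change ∑ J ∈ π.boxes, |q J| ≤ 2 * ε
  linarith

/-- The Saks–Henstock lemma for an integrand `f (k x)` chosen by the tag, applied on each fibre
of `k` with errors `ε / 2 ^ (n + 1)` summing to `ε`. -/
theorem abs_sum_sub_integral_le_of_memBaseSet_index {f : ℕ → (ι → ℝ) → ℝ}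
    (h : ∀ n, Integrable I l (f n) vol) {ε : ℝ} (hε : 0 < ε) {c : NNReal} (k : (ι → ℝ) → ℕ)
    {π : TaggedPrepartition I}
    (hπ : l.MemBaseSet I c (fun x => (h (k x)).convergenceR (ε / 2 / 2 ^ k x) c x) π) :
    |∑ J ∈ π.boxes, (vol J (f (k (π.tag J)) (π.tag J)) -
      integral J l (f (k (π.tag J))) vol)| ≤ ε := by
  set κ : Box ι → ℕ := fun J => k (π.tag J)
  have hεn : ∀ n : ℕ, 0 < ε / 2 / 2 ^ n := fun n => by positivity
  have hfiber : ∀ n, |∑ J ∈ π.boxes with κ J = n,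
      (vol J (f (κ J) (π.tag J)) - integral J l (f (κ J)) vol)| ≤ ε / 2 / 2 ^ n := by
    intro n
    have hπn : l.MemBaseSet I c ((h n).convergenceR (ε / 2 / 2 ^ n) c) (π.filter (κ · = n)) :=
      (hπ.filter _).mono' I le_rfl le_rfl fun J hJ => by
        rw [← (π.mem_filter.1 hJ).2]
        rfl
    have := (h n).dist_integralSum_sum_integral_le_of_memBaseSet (hεn n) hπn
    rw [Real.dist_eq, integralSum, ← Finset.sum_sub_distrib,
      TaggedPrepartition.boxes_filter, TaggedPrepartition.filter_tag] at this
    refine le_of_eq_of_le (congrArg _ (Finset.sum_congr rfl fun J hJ => ?_)) this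
    rw [(Finset.mem_filter.1 hJ).2]
  rw [← Finset.sum_fiberwise_of_maps_to fun J hJ => Finset.mem_image_of_mem κ hJ]
  refine (Finset.abs_sum_le_sum_abs _ _).trans <| (Finset.sum_le_sum fun n _ => hfiber n).trans ?_
  exact (Summable.sum_le_tsum _ (fun n _ => (hεn n).le) (summable_geometric_two' ε)).trans
    (tsum_geometric_two' ε).le

end SaksHenstock

/-- A gauge forcing each tag into every closed box of `π₀` that its tagged box meets. -/
noncomputable def Prepartition.sepRadius (π₀ : Prepartition I) (x : ι → ℝ) : ℝ :=
  if h : (π₀.boxes.filter fun J => x ∉ Box.Icc J).Nonempty then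
    (π₀.boxes.filter fun J => x ∉ Box.Icc J).inf' h fun J => Metric.infDist x (Box.Icc J)
  else 1

theorem Prepartition.sepRadius_pos (π₀ : Prepartition I) (x : ι → ℝ) : 0 < π₀.sepRadius x := by
  rw [sepRadius]
  split_ifs with h
  · refine (Finset.lt_inf'_iff _).2 fun J hJ => ?_
    exact ((Box.isCompact_Icc J).isClosed.notMem_iff_infDist_pos ⟨_, J.lower_mem_Icc⟩).1
      (Finset.mem_filter.1 hJ).2
  · exact one_pos

theorem Prepartition.mem_Icc_of_dist_lt_sepRadius {π₀ : Prepartition I} {J : Box ι}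
    (hJ : J ∈ π₀) {x y : ι → ℝ} (hy : y ∈ Box.Icc J) (hxy : dist x y < π₀.sepRadius x) :
    x ∈ Box.Icc J := by
  by_contra hx
  have hmem : J ∈ π₀.boxes.filter fun J => x ∉ Box.Icc J := Finset.mem_filter.2 ⟨hJ, hx⟩
  have hle : π₀.sepRadius x ≤ Metric.infDist x (Box.Icc J) := by
    rw [sepRadius, dif_pos ⟨J, hmem⟩]
    exact Finset.inf'_le _ hmem
  linarith [Metric.infDist_le_dist_of_mem (x := x) hy]

theorem TaggedPrepartition.IsHenstock.infPrepartition {π : TaggedPrepartition I}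
    (hπ : π.IsHenstock) {π₀ : Prepartition I} {r : (ι → ℝ) → Ioi (0 : ℝ)}
    (hr : π.IsSubordinate r) (hr₀ : ∀ x, (r x : ℝ) < π₀.sepRadius x) :
    (π.infPrepartition π₀).IsHenstock := by
  intro P hP
  have hP' : P ∈ π.toPrepartition.biUnion fun J => π₀.restrict J := hP
  set J := π.toPrepartition.biUnionIndex (fun J => π₀.restrict J) P
  have hJ : J ∈ π := π.toPrepartition.biUnionIndex_mem hP'
  obtain ⟨J₀, hJ₀, hP_eq⟩ :=
    (Prepartition.mem_restrict _).1 (π.toPrepartition.mem_biUnionIndex hP')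
  change π.tag J ∈ Box.Icc P
  obtain ⟨y, hy⟩ := P.nonempty_coe
  have hPJ : P ≤ J := WithBot.coe_le_coe.1 (hP_eq ▸ inf_le_left)
  have hPJ₀ : P ≤ J₀ := WithBot.coe_le_coe.1 (hP_eq ▸ inf_le_right)
  have hdist : dist (π.tag J) y < π₀.sepRadius (π.tag J) := by
    have := Metric.mem_closedBall.1 (hr J hJ (Box.coe_subset_Icc (hPJ hy)))
    rw [dist_comm] at this
    exact this.trans_lt (hr₀ _)
  rw [Box.Icc_eq_inter_of_coe_eq_inf hP_eq]
  exact ⟨hπ J hJ, π₀.mem_Icc_of_dist_lt_sepRadius hJ₀ (Box.coe_subset_Icc (hPJ₀ hy)) hdist⟩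

variable {μ : Measure (ι → ℝ)} [IsLocallyFiniteMeasure μ]

theorem integral_mono {f g : (ι → ℝ) → ℝ} (hf : Integrable I l f μ.toBoxAdditive.toSMul)
    (hg : Integrable I l g μ.toBoxAdditive.toSMul) (hfg : ∀ x ∈ Box.Icc I, f x ≤ g x) :
    integral I l f μ.toBoxAdditive.toSMul ≤ integral I l g μ.toBoxAdditive.toSMul := by
  have := integral_nonneg (l := l) (g := g - f) (fun x hx => sub_nonneg.2 (hfg x hx)) μ
  rw [integral_sub hg hf] at this
  linarith

theorem toSMul_apply_abs (J : Box ι) (y : ℝ) :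
    μ.toBoxAdditive.toSMul J |y| = |μ.toBoxAdditive.toSMul J y| := by
  simp [BoxAdditiveMap.toSMul_apply, abs_mul, abs_of_nonneg measureReal_nonneg]

theorem Integrable.dist_integralSum_abs_sum_abs_integral_le_of_memBaseSet {f : (ι → ℝ) → ℝ}
    (hf : Integrable I l f μ.toBoxAdditive.toSMul) {ε : ℝ} (hε : 0 < ε) {c : NNReal}
    {π : TaggedPrepartition I} (hπ : l.MemBaseSet I c (hf.convergenceR ε c) π) :
    dist (integralSum (fun x => |f x|) μ.toBoxAdditive.toSMul π)
      (∑ J ∈ π.boxes, |integral J l f μ.toBoxAdditive.toSMul|) ≤ 2 * ε := by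
  rw [integralSum, Real.dist_eq, ← Finset.sum_sub_distrib]
  refine (Finset.abs_sum_le_sum_abs _ _).trans <| le_trans (Finset.sum_le_sum fun J _ => ?_)
    (hf.sum_abs_sub_integral_le_of_memBaseSet hε hπ)
  rw [toSMul_apply_abs]
  exact abs_abs_sub_abs_le_abs_sub _ _

theorem sum_abs_integral_le_integral_of_abs_le {f G : (ι → ℝ) → ℝ}
    (hG : Integrable I l G μ.toBoxAdditive.toSMul) (hfG : ∀ x ∈ Box.Icc I, |f x| ≤ G x)
    {π : Prepartition I} (hπ : π.IsPartition) :
    ∑ J ∈ π.boxes, |integral J l f μ.toBoxAdditive.toSMul| ≤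
      integral I l G μ.toBoxAdditive.toSMul := by
  rw [← hG.sum_integral_of_isPartition hπ]
  refine Finset.sum_le_sum fun J hJ => ?_
  have hJI := π.le_of_mem hJ
  exact norm_integral_le_of_norm_le (fun x hx => (Real.norm_eq_abs _).trans_le
    (hfG x (Box.le_iff_Icc.1 hJI hx))) μ (hG.to_subbox hJI)

/-- `|f|` is integrable, with integral the supremum of `∑ |∫_J f|` over partitions: a partition
`π₀` nearly attaining the supremum is refined by `π ⊓ π₀`, which is still Henstock for a gauge
that separates each tag from the boxes of `π₀` not containing it, and Saks–Henstock compares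
the Riemann sum of `|f|` over `π ⊓ π₀` with `∑ |∫_J f|`. -/
theorem Integrable.abs_of_abs_le {f G : (ι → ℝ) → ℝ}
    (hf : Integrable I Henstock f μ.toBoxAdditive.toSMul)
    (hG : Integrable I Henstock G μ.toBoxAdditive.toSMul) (hfG : ∀ x ∈ Box.Icc I, |f x| ≤ G x) :
    Integrable I Henstock (fun x => |f x|) μ.toBoxAdditive.toSMul := by
  set S : Set ℝ := Set.range fun π₀ : {π₀ : Prepartition I // π₀.IsPartition} =>
    ∑ J ∈ π₀.1.boxes, |integral J Henstock f μ.toBoxAdditive.toSMul|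
  have hS : BddAbove S := ⟨integral I Henstock G μ.toBoxAdditive.toSMul,
    Set.forall_mem_range.2 fun π₀ => sum_abs_integral_le_integral_of_abs_le hG hfG π₀.2⟩
  refine ⟨sSup S, hasIntegral_iff.2 fun ε hε => ?_⟩
  have hε3 : 0 < ε / 3 := by positivity
  obtain ⟨_, ⟨π₀, rfl⟩, hπ₀⟩ :=
    exists_lt_of_lt_csSup (Set.range_nonempty_iff_nonempty.2 ⟨⟨⊤, Prepartition.isPartitionTop I⟩⟩)
      (sub_lt_self (sSup S) hε3)
  have hr : ∀ c x, 0 < min (hf.convergenceR (ε / 3) c x : ℝ) (π₀.1.sepRadius x / 2) :=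
    fun c x => lt_min (hf.convergenceR (ε / 3) c x).2 (half_pos (π₀.1.sepRadius_pos x))
  refine ⟨fun c x => ⟨_, hr c x⟩, fun _ => rCond_of_bRiemann_eq_false _ rfl, ?_⟩
  intro c π hπ hpart
  set π' := π.infPrepartition π₀.1
  have hsub : π.IsSubordinate (hf.convergenceR (ε / 3) c) :=
    hπ.isSubordinate.mono fun x _ => Subtype.coe_le_coe.1 (min_le_left _ _)
  have hπ' : Henstock.MemBaseSet I c (hf.convergenceR (ε / 3) c) π' :=
    ⟨hsub.infPrepartition _, fun _ => (hπ.isHenstock rfl).infPrepartition hπ.isSubordinate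
      fun x => (min_le_right _ _).trans_lt (half_lt_self (π₀.1.sepRadius_pos x)),
      fun h => absurd h (by decide), fun h => absurd h (by decide)⟩
  have hsum : dist (integralSum (fun x => |f x|) μ.toBoxAdditive.toSMul π)
      (∑ J ∈ π'.boxes, |integral J Henstock f μ.toBoxAdditive.toSMul|) ≤ 2 * (ε / 3) := by
    rw [← integralSum_inf_partition _ _ π π₀.2]
    exact hf.dist_integralSum_abs_sum_abs_integral_le_of_memBaseSet hε3 hπ'
  have hupper : ∑ J ∈ π'.boxes, |integral J Henstock f μ.toBoxAdditive.toSMul| ≤ sSup S :=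
    le_csSup hS ⟨⟨π'.toPrepartition, hpart.infPrepartition π₀.2⟩, rfl⟩
  have hlower : ∑ J ∈ π₀.1.boxes, |integral J Henstock f μ.toBoxAdditive.toSMul| ≤
      ∑ J ∈ π'.boxes, |integral J Henstock f μ.toBoxAdditive.toSMul| := by
    change _ ≤ ∑ J ∈ (π.toPrepartition ⊓ π₀.1).boxes, _
    rw [inf_comm, Prepartition.inf_def]
    exact hf.toBoxAdditive.sum_abs_le_sum_abs_biUnion le_rfl π₀.1 fun J hJ =>
      hpart.restrict (π₀.1.le_of_mem hJ)
  dsimp only at hπ₀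
  have hclose : dist (∑ J ∈ π'.boxes, |integral J Henstock f μ.toBoxAdditive.toSMul|) (sSup S) ≤
      ε / 3 := by
    rw [Real.dist_eq, abs_sub_comm, abs_of_nonneg (sub_nonneg.2 hupper)]
    linarith
  linarith [dist_triangle (integralSum (fun x => |f x|) μ.toBoxAdditive.toSMul π)
    (∑ J ∈ π'.boxes, |integral J Henstock f μ.toBoxAdditive.toSMul|) (sSup S)]

theorem Integrable.sup_of_abs_sub_le {f g G : (ι → ℝ) → ℝ}
    (hf : Integrable I Henstock f μ.toBoxAdditive.toSMul)
    (hg : Integrable I Henstock g μ.toBoxAdditive.toSMul)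
    (hG : Integrable I Henstock G μ.toBoxAdditive.toSMul)
    (hfg : ∀ x ∈ Box.Icc I, |f x - g x| ≤ G x) :
    Integrable I Henstock (f ⊔ g) μ.toBoxAdditive.toSMul := by
  have hsup : f ⊔ g = (2⁻¹ : ℝ) • (f + g + fun x => |(f - g) x|) := by
    ext x
    simp only [Pi.sup_apply, Pi.smul_apply, Pi.add_apply, Pi.sub_apply, smul_eq_mul]
    rw [max_def]
    split_ifs with h
    · rw [abs_of_nonpos (sub_nonpos.2 h)]; ring
    · rw [abs_of_pos (sub_pos.2 (not_le.1 h))]; ring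
  rw [hsup]
  exact ((hf.add hg).add ((hf.sub hg).abs_of_abs_le hG hfg)).smul _

theorem dist_integralSum_le_of_abs_sub_le {f g : (ι → ℝ) → ℝ} {ε : ℝ}
    {π : TaggedPrepartition I} (hπ : π.IsPartition) (hfg : ∀ x ∈ Box.Icc I, |f x - g x| ≤ ε) :
    dist (integralSum f μ.toBoxAdditive.toSMul π) (integralSum g μ.toBoxAdditive.toSMul π) ≤
      ε * μ.toBoxAdditive I := by
  rw [Real.dist_eq, integralSum, integralSum, ← Finset.sum_sub_distrib,
    ← μ.toBoxAdditive.sum_partition_boxes le_top hπ, Finset.mul_sum]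
  refine (Finset.abs_sum_le_sum_abs _ _).trans (Finset.sum_le_sum fun J _ => ?_)
  simp only [BoxAdditiveMap.toSMul_apply, smul_eq_mul, ← mul_sub, abs_mul,
    Measure.toBoxAdditive_apply, abs_of_nonneg measureReal_nonneg]
  rw [mul_comm]
  exact mul_le_mul_of_nonneg_right (hfg _ (π.tag_mem_Icc J)) measureReal_nonneg

theorem sum_integral_le_sum_integral_of_monotone {φ : ℕ → (ι → ℝ) → ℝ}
    (hφ : ∀ n, Integrable I l (φ n) μ.toBoxAdditive.toSMul)
    (hmono : ∀ x ∈ Box.Icc I, Monotone fun n => φ n x) {π : Prepartition I}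
    {κ₁ κ₂ : Box ι → ℕ} (hκ : ∀ J ∈ π, κ₁ J ≤ κ₂ J) :
    ∑ J ∈ π.boxes, integral J l (φ (κ₁ J)) μ.toBoxAdditive.toSMul ≤
      ∑ J ∈ π.boxes, integral J l (φ (κ₂ J)) μ.toBoxAdditive.toSMul := by
  refine Finset.sum_le_sum fun J hJ => ?_
  have hJI := π.le_of_mem hJ
  exact integral_mono ((hφ _).to_subbox hJI) ((hφ _).to_subbox hJI)
    fun x hx => hmono x (Box.le_iff_Icc.1 hJI hx) (hκ J hJ)

/-- The monotone convergence theorem. Given `ε`, each point `x` picks an index `k x` past a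
fixed `N` with `φ (k x) x` within `ε` of `Φ x`, and the gauge at `x` is the one of `φ (k x)`
with error `ε / 2 ^ (k x + 1)`: Saks–Henstock then compares the Riemann sum of `Φ` with
`∑ ∫_J φ (k (tag J))`, which lies between `∫ φ N` and `L` by monotonicity. -/
theorem hasIntegral_of_monotone (hl : l.bRiemann = false) {φ : ℕ → (ι → ℝ) → ℝ}
    {Φ : (ι → ℝ) → ℝ} {L : ℝ} (hφ : ∀ n, Integrable I l (φ n) μ.toBoxAdditive.toSMul)
    (hmono : ∀ x ∈ Box.Icc I, Monotone fun n => φ n x)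
    (hΦ : ∀ x ∈ Box.Icc I, Tendsto (fun n => φ n x) atTop (𝓝 (Φ x)))
    (hL : Tendsto (fun n => integral I l (φ n) μ.toBoxAdditive.toSMul) atTop (𝓝 L)) :
    HasIntegral I l Φ μ.toBoxAdditive.toSMul L := by
  have hle_L : ∀ n, integral I l (φ n) μ.toBoxAdditive.toSMul ≤ L :=
    Monotone.ge_of_tendsto (fun m n hmn => integral_mono (hφ m) (hφ n)
      fun x hx => hmono x hx hmn) hL
  rw [hasIntegral_iff]
  intro ε' hε'
  have hμI : 0 ≤ μ.toBoxAdditive I := measureReal_nonneg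
  set ε := ε' / (μ.toBoxAdditive I + 2)
  have hε : 0 < ε := by positivity
  obtain ⟨N, hN⟩ := (hL.eventually (eventually_gt_nhds (sub_lt_self L hε))).exists
  have hk : ∀ x, ∃ m, N ≤ m ∧ (x ∈ Box.Icc I → |Φ x - φ m x| ≤ ε) := fun x => by
    by_cases hx : x ∈ Box.Icc I
    · obtain ⟨m, hm⟩ :=
        ((hΦ x hx).eventually (Metric.closedBall_mem_nhds _ hε)).exists_forall_of_atTop
      exact ⟨max m N, le_max_right _ _, fun _ => by
        simpa [abs_sub_comm, Real.dist_eq] using hm _ (le_max_left _ _)⟩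
    · exact ⟨N, le_rfl, fun h => absurd h hx⟩
  choose k hkN hkΦ using hk
  refine ⟨fun c x => (hφ (k x)).convergenceR (ε / 2 / 2 ^ k x) c x,
    fun _ => rCond_of_bRiemann_eq_false _ hl, fun c π hπ hpart => ?_⟩
  set C := ∑ J ∈ π.boxes, integral J l (φ (k (π.tag J))) μ.toBoxAdditive.toSMul
  have hΦk := dist_integralSum_le_of_abs_sub_le (μ := μ) (g := fun x => φ (k x) x) hpart hkΦ
  have hkC : dist (integralSum (fun x => φ (k x) x) μ.toBoxAdditive.toSMul π) C ≤ ε := by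
    rw [Real.dist_eq, integralSum, ← Finset.sum_sub_distrib]
    exact abs_sum_sub_integral_le_of_memBaseSet_index hφ hε k hπ
  have hCN : integral I l (φ N) μ.toBoxAdditive.toSMul ≤ C := by
    rw [← (hφ N).sum_integral_of_isPartition hpart]
    exact sum_integral_le_sum_integral_of_monotone hφ hmono fun J _ => hkN _
  have hCL : C ≤ L := by
    set M := π.boxes.sup fun J => k (π.tag J)
    refine le_trans ?_ (hle_L M)
    rw [← (hφ M).sum_integral_of_isPartition hpart]
    exact sum_integral_le_sum_integral_of_monotone hφ hmono fun J hJ =>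
      Finset.le_sup (f := fun J => k (π.tag J)) hJ
  have hCdist : dist C L ≤ ε := by
    rw [Real.dist_eq, abs_sub_comm, abs_of_nonneg (sub_nonneg.2 hCL)]
    linarith
  calc dist (integralSum Φ μ.toBoxAdditive.toSMul π) L
      ≤ ε * μ.toBoxAdditive I + ε + ε := by
        linarith [dist_triangle4 (integralSum Φ μ.toBoxAdditive.toSMul π)
          (integralSum (fun x => φ (k x) x) μ.toBoxAdditive.toSMul π) C L]
    _ = ε' := by
        simp only [ε]
        field_simp
        ring

theorem exists_hasIntegral_of_monotone (hl : l.bRiemann = false) {φ : ℕ → (ι → ℝ) → ℝ}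
    {Φ : (ι → ℝ) → ℝ} (hφ : ∀ n, Integrable I l (φ n) μ.toBoxAdditive.toSMul)
    (hmono : ∀ x ∈ Box.Icc I, Monotone fun n => φ n x)
    (hΦ : ∀ x ∈ Box.Icc I, Tendsto (fun n => φ n x) atTop (𝓝 (Φ x)))
    (hbdd : BddAbove (Set.range fun n => integral I l (φ n) μ.toBoxAdditive.toSMul)) :
    ∃ L, HasIntegral I l Φ μ.toBoxAdditive.toSMul L ∧
      Tendsto (fun n => integral I l (φ n) μ.toBoxAdditive.toSMul) atTop (𝓝 L) := by
  have hL := tendsto_atTop_ciSup (fun m n hmn => integral_mono (hφ m) (hφ n)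
    fun x hx => hmono x hx hmn) hbdd
  exact ⟨_, hasIntegral_of_monotone hl hφ hmono hΦ hL, hL⟩

theorem exists_hasIntegral_of_antitone (hl : l.bRiemann = false) {φ : ℕ → (ι → ℝ) → ℝ}
    {Φ : (ι → ℝ) → ℝ} (hφ : ∀ n, Integrable I l (φ n) μ.toBoxAdditive.toSMul)
    (hanti : ∀ x ∈ Box.Icc I, Antitone fun n => φ n x)
    (hΦ : ∀ x ∈ Box.Icc I, Tendsto (fun n => φ n x) atTop (𝓝 (Φ x)))
    (hbdd : BddBelow (Set.range fun n => integral I l (φ n) μ.toBoxAdditive.toSMul)) :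
    ∃ L, HasIntegral I l Φ μ.toBoxAdditive.toSMul L ∧
      Tendsto (fun n => integral I l (φ n) μ.toBoxAdditive.toSMul) atTop (𝓝 L) := by
  obtain ⟨b, hb⟩ := hbdd
  obtain ⟨L, hL, hlim⟩ := exists_hasIntegral_of_monotone hl (fun n => (hφ n).neg)
    (fun x hx m n hmn => neg_le_neg (hanti x hx hmn)) (fun x hx => (hΦ x hx).neg)
    ⟨-b, Set.forall_mem_range.2 fun n => by
      rw [integral_neg]
      exact neg_le_neg (hb ⟨n, rfl⟩)⟩
  refine ⟨-L, ?_, by simpa [integral_neg] using hlim.neg⟩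
  convert hL.neg
  ext x
  simp

variable {f : ℕ → (ι → ℝ) → ℝ} {g₁ g₂ : (ι → ℝ) → ℝ}

theorem integrable_tailSup (hf : ∀ k, Integrable I Henstock (f k) μ.toBoxAdditive.toSMul)
    (hg₁ : Integrable I Henstock g₁ μ.toBoxAdditive.toSMul)
    (hg₂ : Integrable I Henstock g₂ μ.toBoxAdditive.toSMul)
    (hfg : ∀ k, ∀ x ∈ Box.Icc I, g₁ x ≤ f k x ∧ f k x ≤ g₂ x) (j : ℕ) :
    Integrable I Henstock (fun x => tailSup (f · x) j) μ.toBoxAdditive.toSMul := by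
  set φ := partialSups fun k => f (j + k)
  have hφ_le : ∀ n, ∀ x ∈ Box.Icc I, g₁ x ≤ φ n x ∧ φ n x ≤ g₂ x := fun n x hx => by
    rw [Pi.partialSups_apply]
    exact ⟨(hfg j x hx).1.trans (le_partialSups_of_le (fun k => f (j + k) x) (Nat.zero_le n)),
      partialSups_le _ _ _ fun k _ => (hfg _ x hx).2⟩
  have hφ : ∀ n, Integrable I Henstock (φ n) μ.toBoxAdditive.toSMul := by
    intro n
    induction n with
    | zero => exact hf j
    | succ n ih =>
      rw [show φ (n + 1) = φ n ⊔ f (j + (n + 1)) from partialSups_succ _ n]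
      refine ih.sup_of_abs_sub_le (hf _) (hg₂.sub hg₁) fun x hx => abs_sub_le_iff.2 ?_
      have := hφ_le n x hx
      have := hfg (j + (n + 1)) x hx
      constructor <;> simp only [Pi.sub_apply] <;> linarith
  obtain ⟨L, hL, -⟩ := exists_hasIntegral_of_monotone rfl hφ
    (fun x _ m n hmn => Pi.le_def.1 (partialSups_monotone _ hmn) x)
    (fun x hx => by
      simpa only [φ, Pi.partialSups_apply] using tendsto_partialSups_tailSup
        ⟨g₂ x, Set.forall_mem_range.2 fun k => (hfg k x hx).2⟩ j)
    ⟨integral I Henstock g₂ μ.toBoxAdditive.toSMul, Set.forall_mem_range.2 fun n =>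
      integral_mono (hφ n) hg₂ fun x hx => (hφ_le n x hx).2⟩
  exact hL.integrable

variable {F : (ι → ℝ) → ℝ}

/-- Reverse Fatou: the decreasing majorants `tailSup (f · x) j` of `f j` converge to `F` and
their integrals to `∫ F`. -/
theorem exists_hasIntegral_and_integral_le_tendsto
    (hf : ∀ k, Integrable I Henstock (f k) μ.toBoxAdditive.toSMul)
    (hg₁ : Integrable I Henstock g₁ μ.toBoxAdditive.toSMul)
    (hg₂ : Integrable I Henstock g₂ μ.toBoxAdditive.toSMul)
    (hfg : ∀ k, ∀ x ∈ Box.Icc I, g₁ x ≤ f k x ∧ f k x ≤ g₂ x)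
    (hF : ∀ x ∈ Box.Icc I, Tendsto (f · x) atTop (𝓝 (F x))) :
    ∃ L, HasIntegral I Henstock F μ.toBoxAdditive.toSMul L ∧ ∃ b : ℕ → ℝ,
      Tendsto b atTop (𝓝 L) ∧ ∀ j, integral I Henstock (f j) μ.toBoxAdditive.toSMul ≤ b j := by
  have hbdd : ∀ x ∈ Box.Icc I, BddAbove (Set.range (f · x)) := fun x hx =>
    ⟨g₂ x, Set.forall_mem_range.2 fun k => (hfg k x hx).2⟩
  have hψ := integrable_tailSup hf hg₁ hg₂ hfg
  have hfψ : ∀ j, ∀ x ∈ Box.Icc I, f j x ≤ tailSup (f · x) j := fun j x hx =>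
    le_tailSup (hbdd x hx) j
  obtain ⟨L, hL, hlim⟩ := exists_hasIntegral_of_antitone rfl hψ
    (fun x hx => antitone_tailSup (hbdd x hx)) (fun x hx => tendsto_tailSup (hF x hx))
    ⟨integral I Henstock g₁ μ.toBoxAdditive.toSMul, Set.forall_mem_range.2 fun j =>
      integral_mono hg₁ (hψ j) fun x hx => (hfg j x hx).1.trans (hfψ j x hx)⟩
  exact ⟨L, hL, _, hlim, fun j => integral_mono (hf j) (hψ j) (hfψ j)⟩

theorem exists_hasIntegral_of_tendsto_of_le
    (hf : ∀ k, Integrable I Henstock (f k) μ.toBoxAdditive.toSMul)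
    (hg₁ : Integrable I Henstock g₁ μ.toBoxAdditive.toSMul)
    (hg₂ : Integrable I Henstock g₂ μ.toBoxAdditive.toSMul)
    (hfg : ∀ k, ∀ x ∈ Box.Icc I, g₁ x ≤ f k x ∧ f k x ≤ g₂ x)
    (hF : ∀ x ∈ Box.Icc I, Tendsto (f · x) atTop (𝓝 (F x))) :
    ∃ L, HasIntegral I Henstock F μ.toBoxAdditive.toSMul L ∧
      Tendsto (fun j => integral I Henstock (f j) μ.toBoxAdditive.toSMul) atTop (𝓝 L) := by
  obtain ⟨L, hL, b, hb, hfb⟩ := exists_hasIntegral_and_integral_le_tendsto hf hg₁ hg₂ hfg hF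
  obtain ⟨L', hL', b', hb', hfb'⟩ := exists_hasIntegral_and_integral_le_tendsto
    (f := fun k x => -f k x) (F := fun x => -F x) (fun k => (hf k).neg) hg₂.neg hg₁.neg
    (fun k x hx => ⟨neg_le_neg (hfg k x hx).2, neg_le_neg (hfg k x hx).1⟩)
    fun x hx => (hF x hx).neg
  have hL'L : L' = -L := hL'.unique hL.neg
  refine ⟨L, hL, tendsto_of_tendsto_of_tendsto_of_le_of_le (by simpa [hL'L] using hb'.neg) hb
    (fun j => ?_) hfb⟩
  have := hfb' j
  rw [show (fun x => -f j x) = -f j from rfl, integral_neg] at this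
  exact neg_le_of_neg_le this

end BoxIntegral

/-! ### Bricks and boxes -/

def Brick.box (I : Brick ι) : Box ι := ⟨I.lower, I.upper, I.lt⟩

def BoxIntegral.Box.brick (J : Box ι) : Brick ι := ⟨J.lower, J.upper, J.lower_lt_upper⟩

namespace Brick

theorem brick_box (I : Brick ι) : I.box.brick = I := rfl

theorem box_injective : Function.Injective (box : Brick ι → Box ι) :=
  Function.LeftInverse.injective brick_box

theorem Icc_box (I : Brick ι) : Box.Icc I.box = I.toSet := by
  ext x
  simp [Box.Icc_def, Brick.toSet, Brick.box, Pi.le_def, forall_and]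

theorem mem_box {I : Brick ι} {x : ι → ℝ} : x ∈ I.box ↔ ∀ i, x i ∈ Ioc (I.lower i) (I.upper i) :=
  Iff.rfl

theorem vol_nonneg (I : Brick ι) : 0 ≤ I.vol :=
  Finset.prod_nonneg fun j _ => sub_nonneg.2 (I.lt j).le

theorem inter_nonempty (I : Brick ι) : I.inter.Nonempty :=
  ⟨fun i => (I.lower i + I.upper i) / 2, fun i => ⟨by linarith [I.lt i], by linarith [I.lt i]⟩⟩

theorem inter_subset_box (I : Brick ι) : I.inter ⊆ I.box :=
  fun _ hx i => Ioo_subset_Ioc_self (hx i)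

theorem disjoint_box_of_inter_eq_empty {I J : Brick ι} (h : I.inter ∩ J.inter = ∅) :
    Disjoint (I.box : Set (ι → ℝ)) J.box := by
  refine Set.disjoint_left.2 fun x hxI hxJ => ?_
  -- the midpoint of the box `I ⊓ J` lies in both interiors
  have hmid : (fun i => (max (I.lower i) (J.lower i) + min (I.upper i) (J.upper i)) / 2) ∈
      I.inter ∩ J.inter := by
    refine ⟨fun i => ?_, fun i => ?_⟩ <;>
    · have hlt : max (I.lower i) (J.lower i) < min (I.upper i) (J.upper i) :=
        (max_lt (mem_box.1 hxI i).1 (mem_box.1 hxJ i).1).trans_le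
          (le_min (mem_box.1 hxI i).2 (mem_box.1 hxJ i).2)
      constructor <;> linarith [le_max_left (I.lower i) (J.lower i),
        le_max_right (I.lower i) (J.lower i), min_le_left (I.upper i) (J.upper i),
        min_le_right (I.upper i) (J.upper i)]
  rwa [h] at hmid

end Brick

namespace BoxIntegral.Box

theorem box_brick (J : Box ι) : J.brick.box = J := rfl

theorem brick_injective : Function.Injective (brick : Box ι → Brick ι) :=
  Function.LeftInverse.injective box_brick

theorem toSet_brick (J : Box ι) : J.brick.toSet = Box.Icc J := by
  rw [← J.brick.Icc_box, box_brick]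

theorem closure_coe {α : Type*} (J : Box α) : closure (J : Set (α → ℝ)) = Box.Icc J := by
  simp [coe_eq_pi, closure_pi_set, closure_Ioc (J.lower_lt_upper _).ne, Icc_eq_pi]

end BoxIntegral.Box

namespace TaggedDiv

variable {I : Brick ι}

noncomputable def ofBox (π : TaggedPrepartition I.box) (hπ : π.IsPartition) (hH : π.IsHenstock) :
    TaggedDiv I where
  pieces := π.boxes.image fun J => (J.brick, π.tag J)
  subset_of_mem := by
    simp only [Finset.mem_image, forall_exists_index, and_imp]
    rintro _ J hJ rfl
    rw [Box.toSet_brick, ← Brick.Icc_box]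
    exact Box.le_iff_Icc.1 (π.le_of_mem hJ)
  tag_mem := by
    simp only [Finset.mem_image, forall_exists_index, and_imp]
    rintro _ J hJ rfl
    rw [Box.toSet_brick]
    exact hH J hJ
  nonoverlap := by
    simp only [Finset.mem_image, forall_exists_index, and_imp]
    rintro _ J hJ rfl _ K hK rfl hne
    have hJK : J ≠ K := by rintro rfl; exact hne rfl
    exact Set.disjoint_iff_inter_eq_empty.1 <|
      (π.disjoint_coe_of_mem hJ hK hJK).mono J.brick.inter_subset_box K.brick.inter_subset_box
  cover := calc
    I.toSet = closure π.toPrepartition.iUnion := by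
      rw [hπ.iUnion_eq, Box.closure_coe, Brick.Icc_box]
    _ = ⋃ J ∈ π.boxes, Box.Icc J := by
      simp only [Prepartition.iUnion_def', Finset.closure_biUnion, Box.closure_coe]
    _ = _ := by simp only [Finset.set_biUnion_finset_image, Box.toSet_brick]

theorem riemannSum_ofBox (π : TaggedPrepartition I.box) (hπ : π.IsPartition) (hH : π.IsHenstock)
    (f : (ι → ℝ) → ℝ) :
    riemannSum f (ofBox π hπ hH) = integralSum f BoxAdditiveMap.volume π := by
  rw [riemannSum, ofBox, integralSum,
    Finset.sum_image fun J _ K _ h => Box.brick_injective (congrArg Prod.fst h)]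
  refine Finset.sum_congr rfl fun J _ => ?_
  rw [BoxAdditiveMap.volume_apply, smul_eq_mul, mul_comm]
  rfl

theorem compat_ofBox (π : TaggedPrepartition I.box) (hπ : π.IsPartition) (hH : π.IsHenstock)
    {r : (ι → ℝ) → Ioi (0 : ℝ)} (hsub : π.IsSubordinate r) {δ : (ι → ℝ) → ℝ}
    (hδ : ∀ x ∈ I.toSet, (r x : ℝ) < δ x) :
    Compat (ofBox π hπ hH) δ := by
  simp only [Compat, ofBox, Finset.mem_image, forall_exists_index, and_imp]
  rintro _ J hJ rfl
  rw [Box.toSet_brick]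
  have htag : π.tag J ∈ I.toSet := I.Icc_box ▸ π.tag_mem_Icc J
  exact (hsub J hJ).trans (Metric.closedBall_subset_ball (hδ _ htag))

theorem eq_of_mem_of_fst_eq (D : TaggedDiv I) {p q : Brick ι × (ι → ℝ)} (hp : p ∈ D.pieces)
    (hq : q ∈ D.pieces) (h : p.1 = q.1) : p = q := by
  by_contra hne
  have hempty := D.nonoverlap p hp q hq hne
  rw [h, Set.inter_self] at hempty
  exact q.1.inter_nonempty.ne_empty hempty

/-- The tag of the piece of `D` over the box `J`, with junk value `I.upper` if there is none. -/
noncomputable def tagOf (D : TaggedDiv I) (J : Box ι) : ι → ℝ :=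
  if h : ∃ p ∈ D.pieces, p.1.box = J then h.choose.2 else I.upper

theorem tagOf_box (D : TaggedDiv I) {p : Brick ι × (ι → ℝ)} (hp : p ∈ D.pieces) :
    D.tagOf p.1.box = p.2 := by
  have h : ∃ q ∈ D.pieces, q.1.box = p.1.box := ⟨p, hp, rfl⟩
  rw [tagOf, dif_pos h]
  exact congrArg Prod.snd
    (D.eq_of_mem_of_fst_eq h.choose_spec.1 hp (Brick.box_injective h.choose_spec.2))

theorem tagOf_mem (D : TaggedDiv I) (J : Box ι) : D.tagOf J ∈ I.toSet := by
  rw [tagOf]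
  split_ifs with h
  · exact D.subset_of_mem _ h.choose_spec.1 (D.tag_mem _ h.choose_spec.1)
  · exact fun j => ⟨(I.lt j).le, le_rfl⟩

noncomputable def toBox (D : TaggedDiv I) : TaggedPrepartition I.box where
  boxes := D.pieces.image fun p => p.1.box
  le_of_mem' := by
    simp only [Finset.mem_image, forall_exists_index, and_imp]
    rintro _ p hp rfl
    rw [Box.le_iff_Icc, Brick.Icc_box, Brick.Icc_box]
    exact D.subset_of_mem p hp
  pairwiseDisjoint := by
    simp only [Set.Pairwise, Finset.coe_image, Set.mem_image,
      Finset.mem_coe, forall_exists_index, and_imp, forall_apply_eq_imp_iff₂]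
    intro p hp q hq hne
    refine Brick.disjoint_box_of_inter_eq_empty (D.nonoverlap p hp q hq fun h => hne ?_)
    rw [h]
  tag := D.tagOf
  tag_mem_Icc J := I.Icc_box ▸ D.tagOf_mem J

theorem mem_toBox (D : TaggedDiv I) {J : Box ι} : J ∈ D.toBox ↔ ∃ p ∈ D.pieces, p.1.box = J :=
  Finset.mem_image

theorem toBox_isPartition (D : TaggedDiv I) : D.toBox.IsPartition := by
  intro x hx
  -- some piece contains `x - t • 1` for arbitrarily small `t > 0`; its half-open box holds `x`
  set y : ℝ → ι → ℝ := fun t i => x i - t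
  have hy : Tendsto y (𝓝[>] 0) (𝓝 x) := by
    refine tendsto_pi_nhds.2 fun i => ?_
    have : Tendsto (fun t : ℝ => x i - t) (𝓝 0) (𝓝 (x i - 0)) :=
      tendsto_const_nhds.sub tendsto_id
    simpa using this.mono_left nhdsWithin_le_nhds
  have hyI : ∀ᶠ t in 𝓝[>] 0, y t ∈ I.toSet := by
    refine eventually_all.2 fun i => ?_
    filter_upwards [Ioo_mem_nhdsGT (sub_pos.2 (Brick.mem_box.1 hx i).1)] with t ht
    exact ⟨by linarith [ht.2], by linarith [ht.1, (Brick.mem_box.1 hx i).2]⟩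
  have hcover : ∃ᶠ t in 𝓝[>] 0, ∃ p ∈ D.pieces, y t ∈ p.1.toSet := by
    refine (hyI.mono fun t ht => ?_).frequently
    simpa [D.cover] using ht
  obtain ⟨p, hp, hfreq⟩ := (D.pieces.frequently_exists).1 hcover
  have hxp : x ∈ p.1.toSet := by
    refine IsClosed.mem_of_frequently_of_tendsto ?_ hfreq hy
    exact p.1.Icc_box ▸ (Box.isCompact_Icc _).isClosed
  obtain ⟨t, hyt, ht⟩ := (hfreq.and_eventually self_mem_nhdsWithin).exists
  refine ⟨p.1.box, D.mem_toBox.2 ⟨p, hp, rfl⟩, fun i => ⟨?_, (hxp i).2⟩⟩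
  have hlow : p.1.lower i ≤ x i - t := (hyt i).1
  exact hlow.trans_lt (sub_lt_self _ ht)

theorem toBox_isHenstock (D : TaggedDiv I) : D.toBox.IsHenstock := by
  intro J hJ
  obtain ⟨p, hp, rfl⟩ := D.mem_toBox.1 hJ
  change D.tagOf p.1.box ∈ Box.Icc p.1.box
  rw [D.tagOf_box hp, Brick.Icc_box]
  exact D.tag_mem p hp

theorem toBox_isSubordinate (D : TaggedDiv I) {δ : (ι → ℝ) → ℝ} (hD : Compat D δ)
    {r : (ι → ℝ) → Ioi (0 : ℝ)} (hr : ∀ x ∈ I.toSet, δ x ≤ r x) : D.toBox.IsSubordinate r := by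
  intro J hJ
  obtain ⟨p, hp, rfl⟩ := D.mem_toBox.1 hJ
  change Box.Icc p.1.box ⊆ Metric.closedBall (D.tagOf p.1.box) (r (D.tagOf p.1.box))
  rw [D.tagOf_box hp, Brick.Icc_box]
  exact (hD p hp).trans <| Metric.ball_subset_closedBall.trans <|
    Metric.closedBall_subset_closedBall (hr _ (D.subset_of_mem p hp (D.tag_mem p hp)))

theorem integralSum_toBox (D : TaggedDiv I) (f : (ι → ℝ) → ℝ) :
    integralSum f BoxAdditiveMap.volume D.toBox = riemannSum f D := by
  rw [integralSum, riemannSum]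
  change ∑ J ∈ D.pieces.image _, _ = _
  rw [Finset.sum_image fun p hp q hq h => D.eq_of_mem_of_fst_eq hp hq (Brick.box_injective h)]
  refine Finset.sum_congr rfl fun p hp => ?_
  change BoxAdditiveMap.volume p.1.box (f (D.tagOf p.1.box)) = _
  rw [D.tagOf_box hp, BoxAdditiveMap.volume_apply, smul_eq_mul, mul_comm]
  rfl

end TaggedDiv

theorem IsGauge.exists_lt {I : Brick ι} {δ : (ι → ℝ) → ℝ} (hδ : IsGauge I δ) :
    ∃ r : (ι → ℝ) → Ioi (0 : ℝ), ∀ x ∈ I.toSet, (r x : ℝ) < δ x := by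
  have hr : ∀ x, 0 < if x ∈ I.toSet then δ x / 2 else 1 := fun x => by
    split_ifs with hx
    exacts [half_pos (hδ x hx), one_pos]
  refine ⟨fun x => ⟨_, hr x⟩, fun x hx => ?_⟩
  simp only [hx, if_true]
  linarith [hδ x hx]

theorem hasHK_iff_hasIntegral {I : Brick ι} {f : (ι → ℝ) → ℝ} {A : ℝ} :
    HasHK I f A ↔ HasIntegral I.box Henstock f BoxAdditiveMap.volume A := by
  rw [hasIntegral_iff]
  constructor
  · intro h ε hε
    obtain ⟨δ, hδ, hδD⟩ := h (ε / 2) (half_pos hε)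
    obtain ⟨r, hr⟩ := hδ.exists_lt
    refine ⟨fun _ => r, fun _ => rCond_of_bRiemann_eq_false _ rfl, fun c π hπ hpart => ?_⟩
    have hD := hδD _ (TaggedDiv.compat_ofBox π hpart (hπ.isHenstock rfl) hπ.isSubordinate hr)
    rw [TaggedDiv.riemannSum_ofBox, ← Real.dist_eq] at hD
    linarith
  · intro h ε hε
    obtain ⟨r, -, hr⟩ := h (ε / 2) (half_pos hε)
    refine ⟨fun x => r 1 x, fun x _ => (r 1 x).2, fun D hD => ?_⟩
    have hmem : Henstock.MemBaseSet I.box 1 (r 1) D.toBox :=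
      ⟨D.toBox_isSubordinate hD fun _ _ => le_rfl, fun _ => D.toBox_isHenstock,
        fun h => absurd h (by decide), fun h => absurd h (by decide)⟩
    have := hr 1 D.toBox hmem D.toBox_isPartition
    rw [TaggedDiv.integralSum_toBox, Real.dist_eq] at this
    linarith

/-! ### Null sets -/

section NullSets

variable {I : Brick ι} {X : Set (ι → ℝ)}

theorem mustar_mono {Y : Set (ι → ℝ)} (h : Y ⊆ X) : mustar I Y ≤ mustar I X := by
  refine iInf₂_mono fun δ _ => iSup₂_mono fun D _ => ENNReal.ofReal_le_ofReal ?_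
  refine Finset.sum_le_sum fun p _ => ?_
  by_cases hY : p.2 ∈ Y
  · simp [hY, h hY]
  · simp [hY]

theorem exists_sum_vol_le_of_mustar_eq_zero (hX : mustar I X = 0) {ε : ℝ} (hε : 0 < ε) :
    ∃ r : (ι → ℝ) → Ioi (0 : ℝ), ∀ π : TaggedPrepartition I.box, π.IsHenstock →
      π.IsSubordinate r → (∀ J ∈ π, π.tag J ∈ X) → ∑ J ∈ π.boxes, J.brick.vol ≤ ε := by
  have hlt : mustar I X < ENNReal.ofReal ε := hX ▸ ENNReal.ofReal_pos.2 hε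
  simp only [mustar, variationOn, variation, iInf_lt_iff] at hlt
  obtain ⟨δ, hδ, hδD⟩ := hlt
  obtain ⟨r, hr⟩ := hδ.exists_lt
  refine ⟨r, fun π hH hsub htag => ?_⟩
  set π' := π.unionComplToSubordinate π.toPrepartition.compl π.toPrepartition.iUnion_compl r
  have hpart : π'.IsPartition := TaggedPrepartition.isPartition_unionComplToSubordinate _ _ _ _
  have hH' : π'.IsHenstock := hH.disjUnion (Prepartition.isHenstock_toSubordinate _ _) _
  have hsub' : π'.IsSubordinate r :=
    hsub.disjUnion (Prepartition.isSubordinate_toSubordinate _ _) _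
  set D := TaggedDiv.ofBox π' hpart hH'
  have hsum : ∑ J ∈ π.boxes, J.brick.vol ≤
      varSum (fun J P => if P ∈ X then J.vol else 0) D := by
    have hsubset : π.boxes.image (fun J => (J.brick, π'.tag J)) ⊆ D.pieces :=
      Finset.image_subset_image Finset.subset_union_left
    calc ∑ J ∈ π.boxes, J.brick.vol
        = ∑ p ∈ π.boxes.image (fun J => (J.brick, π'.tag J)), |if p.2 ∈ X then p.1.vol else 0| := by
          rw [Finset.sum_image fun J _ K _ h => Box.brick_injective (congrArg Prod.fst h)]
          refine Finset.sum_congr rfl fun J hJ => ?_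
          have htag' : π'.tag J = π.tag J := TaggedPrepartition.disjUnion_tag_of_mem_left _ hJ
          rw [htag', if_pos (htag J hJ), abs_of_nonneg J.brick.vol_nonneg]
      _ ≤ varSum (fun J P => if P ∈ X then J.vol else 0) D :=
          Finset.sum_le_sum_of_subset_of_nonneg hsubset fun _ _ _ => abs_nonneg _
  have hD : ENNReal.ofReal (varSum (fun J P => if P ∈ X then J.vol else 0) D) <
      ENNReal.ofReal ε :=
    lt_of_le_of_lt (le_iSup₂ (f := fun (D : TaggedDiv I) (_ : D ∈ {D : TaggedDiv I | Compat D δ}) =>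
      ENNReal.ofReal (varSum (fun J P => if P ∈ X then J.vol else 0) D)) D
      (TaggedDiv.compat_ofBox π' hpart hH' hsub' hr)) hδD
  exact hsum.trans ((ENNReal.ofReal_lt_ofReal_iff hε).1 hD).le

theorem exists_sum_vol_mul_abs_le_of_mustar_eq_zero (hX : mustar I X = 0) (h : (ι → ℝ) → ℝ)
    {ε : ℝ} (hε : 0 < ε) :
    ∃ r : (ι → ℝ) → Ioi (0 : ℝ), ∀ π : TaggedPrepartition I.box, π.IsHenstock →
      π.IsSubordinate r → ∑ J ∈ π.boxes with π.tag J ∈ X, J.brick.vol * |h (π.tag J)| ≤ ε := by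
  -- `|h| < n + 1` on `{x ∈ X | ⌊|h x|⌋₊ = n}`, so a volume budget of `ε / 2 ^ (n + 1) / (n + 1)`
  -- there keeps the contribution of that piece below `ε / 2 ^ (n + 1)`
  have hXn : ∀ n : ℕ, mustar I {x ∈ X | ⌊|h x|⌋₊ = n} = 0 := fun n =>
    nonpos_iff_eq_zero.1 ((mustar_mono fun _ hx => hx.1).trans hX.le)
  have hεn : ∀ n : ℕ, 0 < ε / 2 / 2 ^ n / (n + 1) := fun n => by positivity
  choose r hr using fun n => exists_sum_vol_le_of_mustar_eq_zero (hXn n) (hεn n)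
  refine ⟨fun x => r ⌊|h x|⌋₊ x, fun π hH hsub => ?_⟩
  set κ : Box ι → ℕ := fun J => ⌊|h (π.tag J)|⌋₊
  set S : Finset (Box ι) := π.boxes.filter fun J => π.tag J ∈ X
  have hlevel : ∀ n : ℕ, ∑ J ∈ S with κ J = n, J.brick.vol * |h (π.tag J)| ≤ ε / 2 / 2 ^ n := by
    intro n
    set σ := π.filter fun J => π.tag J ∈ X ∧ κ J = n
    have hσ : ∑ J ∈ σ.boxes, J.brick.vol ≤ ε / 2 / 2 ^ n / (n + 1) := by
      refine hr n σ (fun J hJ => hH J (π.mem_filter.1 hJ).1) (fun J hJ => ?_)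
        fun J hJ => (π.mem_filter.1 hJ).2
      have := hsub J (π.mem_filter.1 hJ).1
      rwa [← (π.mem_filter.1 hJ).2.2]
    calc ∑ J ∈ S with κ J = n, J.brick.vol * |h (π.tag J)|
        ≤ ∑ J ∈ S with κ J = n, J.brick.vol * (n + 1) := by
          refine Finset.sum_le_sum fun J hJ => mul_le_mul_of_nonneg_left ?_ J.brick.vol_nonneg
          have := Nat.lt_floor_add_one |h (π.tag J)|
          rw [← (Finset.mem_filter.1 hJ).2]
          exact this.le
      _ = (∑ J ∈ σ.boxes, J.brick.vol) * (n + 1) := by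
          rw [Finset.sum_mul, Finset.filter_filter]
          exact Finset.sum_congr (Finset.ext fun J => by simp [σ]) fun _ _ => rfl
      _ ≤ ε / 2 / 2 ^ n / (n + 1) * (n + 1) := by gcongr
      _ = ε / 2 / 2 ^ n := div_mul_cancel₀ _ (by positivity)
  calc ∑ J ∈ S, J.brick.vol * |h (π.tag J)|
      = ∑ n ∈ S.image κ, ∑ J ∈ S with κ J = n, J.brick.vol * |h (π.tag J)| :=
        (Finset.sum_fiberwise_of_maps_to (fun J hJ => Finset.mem_image_of_mem κ hJ) _).symm
    _ ≤ ∑ n ∈ S.image κ, ε / 2 / 2 ^ n := Finset.sum_le_sum fun n _ => hlevel n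
    _ ≤ ε := (Summable.sum_le_tsum _ (fun n _ => by positivity) (summable_geometric_two' ε)).trans
        (tsum_geometric_two' ε).le

theorem hasIntegral_zero_of_mustar_eq_zero (hX : mustar I X = 0) {h : (ι → ℝ) → ℝ}
    (hh : ∀ x ∈ I.toSet, x ∉ X → h x = 0) :
    HasIntegral I.box Henstock h BoxAdditiveMap.volume 0 := by
  rw [hasIntegral_iff]
  intro ε hε
  obtain ⟨r, hr⟩ := exists_sum_vol_mul_abs_le_of_mustar_eq_zero hX h hε
  refine ⟨fun _ => r, fun _ => rCond_of_bRiemann_eq_false _ rfl, fun c π hπ _ => ?_⟩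
  calc dist (integralSum h BoxAdditiveMap.volume π) 0
      ≤ ∑ J ∈ π.boxes, J.brick.vol * |h (π.tag J)| := by
        rw [dist_zero_right, integralSum]
        refine (norm_sum_le _ _).trans (le_of_eq (Finset.sum_congr rfl fun J _ => ?_))
        rw [BoxAdditiveMap.volume_apply, norm_smul, Real.norm_eq_abs, Real.norm_eq_abs]
        exact congrArg (· * |h (π.tag J)|) (abs_of_nonneg J.brick.vol_nonneg)
    _ = ∑ J ∈ π.boxes with π.tag J ∈ X, J.brick.vol * |h (π.tag J)| := by
        refine (Finset.sum_filter_of_ne fun J _ hJ => ?_).symm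
        by_contra hJX
        exact hJ (by rw [hh _ (I.Icc_box ▸ π.tag_mem_Icc J) hJX, abs_zero, mul_zero])
    _ ≤ ε := hr π (hπ.isHenstock rfl) hπ.isSubordinate

theorem HasHK.congr_of_mustar_eq_zero {f g : (ι → ℝ) → ℝ} {A : ℝ} (hf : HasHK I f A)
    (hX : mustar I X = 0) (hfg : ∀ x ∈ I.toSet, x ∉ X → f x = g x) : HasHK I g A := by
  rw [hasHK_iff_hasIntegral] at hf ⊢
  simpa using hf.add (hasIntegral_zero_of_mustar_eq_zero hX (h := g - f) fun x hx hxX => by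
    simp [hfg x hx hxX])

end NullSets

theorem exists_hasHK_of_tendsto_of_le {I : Brick ι} {f : ℕ → (ι → ℝ) → ℝ}
    {F g₁ g₂ : (ι → ℝ) → ℝ} {G₁ G₂ : ℝ} {A : ℕ → ℝ}
    (hg₁ : HasHK I g₁ G₁) (hg₂ : HasHK I g₂ G₂) (hf : ∀ j, HasHK I (f j) (A j))
    (hfg : ∀ j, ∀ P ∈ I.toSet, g₁ P ≤ f j P ∧ f j P ≤ g₂ P)
    (hF : ∀ P ∈ I.toSet, Tendsto (f · P) atTop (𝓝 (F P))) :
    ∃ L, HasHK I F L ∧ Tendsto A atTop (𝓝 L) := by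
  simp only [hasHK_iff_hasIntegral] at hg₁ hg₂ hf ⊢
  rw [← I.Icc_box] at hfg hF
  obtain ⟨L, hL, hA⟩ := exists_hasIntegral_of_tendsto_of_le (fun j => (hf j).integrable)
    hg₁.integrable hg₂.integrable hfg hF
  exact ⟨L, hL, hA.congr fun j => (hf j).integral_eq⟩

/-- **Dominated convergence for gauge integrals.** -/
theorem dominated_convergence_hk (I : Brick ι) (g₁ g₂ F : (ι → ℝ) → ℝ)
    (f : ℕ → (ι → ℝ) → ℝ) (G₁ G₂ : ℝ) (A : ℕ → ℝ)
    (hg₁ : HasHK I g₁ G₁) (hg₂ : HasHK I g₂ G₂) (hf : ∀ j, HasHK I (f j) (A j))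
    (hle : ∀ j, ∀ P ∈ I.toSet, g₁ P ≤ f j P ∧ f j P ≤ g₂ P)
    (X : Set (ι → ℝ)) (hX : mustar I X = 0)
    (hconv : ∀ P ∈ I.toSet, P ∉ X →
      Filter.Tendsto (fun j => f j P) Filter.atTop (nhds (F P))) :
    ∃ L : ℝ, HasHK I F L ∧ Filter.Tendsto A Filter.atTop (nhds L) := by
  -- redefining `f j` and `F` as `g₁` on the null set `X` makes the convergence hold everywhere
  set f' : ℕ → (ι → ℝ) → ℝ := fun j P => if P ∈ X then g₁ P else f j P
  set F' : (ι → ℝ) → ℝ := fun P => if P ∈ X then g₁ P else F P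
  have hf' : ∀ j, HasHK I (f' j) (A j) := fun j =>
    (hf j).congr_of_mustar_eq_zero hX fun P _ hP => by simp [f', hP]
  have hle' : ∀ j, ∀ P ∈ I.toSet, g₁ P ≤ f' j P ∧ f' j P ≤ g₂ P := fun j P hP => by
    by_cases hPX : P ∈ X
    · simpa [f', hPX] using (hle 0 P hP).1.trans (hle 0 P hP).2
    · simpa [f', hPX] using hle j P hP
  have hconv' : ∀ P ∈ I.toSet, Tendsto (f' · P) atTop (𝓝 (F' P)) := fun P hP => by
    by_cases hPX : P ∈ X
    · simp [f', F', hPX]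
    · simpa [f', F', hPX] using hconv P hP hPX
  obtain ⟨L, hL, hA⟩ := exists_hasHK_of_tendsto_of_le hg₁ hg₂ hf' hle' hconv'
  exact ⟨L, hL.congr_of_mustar_eq_zero hX fun P _ hP => by simp [F', hP], hA⟩
end

section
/- (Cauchy extension) If f is Henstock–Kurzweil integrable on [a,b] for every b with a < b < c, with integral F(a,b), and lim_{b→c⁻} F(a,b) = F exists, then f is Henstock–Kurzweil integrable on [a,c] with integral F. -/
open Set Filter

/-- A tagged division of the compact interval `[a,b]`: partition points
`a = t 0 ≤ t 1 ≤ ⋯ ≤ t n = b` with a tag in each subinterval. -/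
structure TaggedDiv1 (a b : ℝ) where
  n : ℕ
  t : Fin (n + 1) → ℝ
  tag : Fin n → ℝ
  mono : Monotone t
  first : t 0 = a
  last : t (Fin.last n) = b
  tag_mem : ∀ i : Fin n, tag i ∈ Set.Icc (t i.castSucc) (t i.succ)

/-- A tagged division is compatible with the gauge `δ` if each subinterval lies in the
open interval of radius `δ` about its tag. -/
def Compat1 {a b : ℝ} (D : TaggedDiv1 a b) (δ : ℝ → ℝ) : Prop :=
  ∀ i : Fin D.n, Set.Icc (D.t i.castSucc) (D.t i.succ) ⊆
    Set.Ioo (D.tag i - δ (D.tag i)) (D.tag i + δ (D.tag i))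

/-- The Riemann sum of `f` over a tagged division of `[a,b]`. -/
noncomputable def riemannSum1 {a b : ℝ} (f : ℝ → ℝ) (D : TaggedDiv1 a b) : ℝ :=
  ∑ i : Fin D.n, f (D.tag i) * (D.t i.succ - D.t i.castSucc)

/-- `f` has Henstock–Kurzweil integral `A` on `[a,b]`. -/
def HasHK1 (f : ℝ → ℝ) (a b A : ℝ) : Prop :=
  ∀ ε > 0, ∃ δ : ℝ → ℝ, (∀ x ∈ Set.Icc a b, 0 < δ x) ∧
    ∀ D : TaggedDiv1 a b, Compat1 D δ → |riemannSum1 f D - A| < ε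

/-!
Choose a grid `a = s 0 < s 1 < ⋯ → c`. On each band `[s k, s (k+1)]` the integral is
`Φ (s (k+1)) - Φ (s k)`, where `Φ` is `F` redefined as `0` at `a`; take a gauge for it with error
`ε / 2^(k+1)`. By the Saks–Henstock argument this gauge also controls fine divisions of every
initial segment `[s k, w]` of the band. The gauge `δ` on `[a,c)` is finer than all band gauges and
so small that a grid point interior to a tagged interval must be its tag, so a `δ`-fine division of
`[a,b]`, `b < c`, splits at the grid points into band pieces with total error at most `ε`. At `c`,
`δ c` is so small that the last interval `[b,c]`, which must be tagged at `c`, contributes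
`f c * (c - b) ≈ 0`, and `Φ b ≈ L`.
-/

open Topology

section MinMax

variable {δ : ℝ → ℝ} {x y τ m : ℝ}

lemma Icc_min_subset_Ioo (hτ : τ ∈ Icc x y) (hI : Icc x y ⊆ Ioo (τ - δ τ) (τ + δ τ))
    (hm : 0 < δ m) (hstrad : x < m → m < y → τ = m) :
    Icc (min x m) (min y m) ⊆ Ioo (min τ m - δ (min τ m)) (min τ m + δ (min τ m)) := by
  rcases le_or_gt y m with hy | hy
  · rwa [min_eq_left hy, min_eq_left (hτ.1.trans (hτ.2.trans hy)), min_eq_left (hτ.2.trans hy)]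
  rcases le_or_gt m x with hx | hx
  · rw [min_eq_right hx, min_eq_right hy.le, min_eq_right (hx.trans hτ.1), Icc_self]
    exact singleton_subset_iff.mpr ⟨by linarith, by linarith⟩
  · obtain rfl := hstrad hx hy
    rw [min_eq_left hx.le, min_eq_right hy.le, min_self]
    exact (Icc_subset_Icc_right hy.le).trans hI

lemma Icc_max_subset_Ioo (hτ : τ ∈ Icc x y) (hI : Icc x y ⊆ Ioo (τ - δ τ) (τ + δ τ))
    (hm : 0 < δ m) (hstrad : x < m → m < y → τ = m) :
    Icc (max x m) (max y m) ⊆ Ioo (max τ m - δ (max τ m)) (max τ m + δ (max τ m)) := by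
  rcases le_or_gt m x with hx | hx
  · rwa [max_eq_left hx, max_eq_left (hx.trans (hτ.1.trans hτ.2)), max_eq_left (hx.trans hτ.1)]
  rcases le_or_gt y m with hy | hy
  · rw [max_eq_right hx.le, max_eq_right hy, max_eq_right (hτ.2.trans hy), Icc_self]
    exact singleton_subset_iff.mpr ⟨by linarith, by linarith⟩
  · obtain rfl := hstrad hx hy
    rw [max_eq_right hx.le, max_eq_left hy.le, max_self]
    exact (Icc_subset_Icc_left hx.le).trans hI

lemma mul_sub_min_add_mul_sub_max (g : ℝ → ℝ) (hτ : τ ∈ Icc x y)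
    (hstrad : x < m → m < y → τ = m) :
    g (min τ m) * (min y m - min x m) + g (max τ m) * (max y m - max x m) = g τ * (y - x) := by
  rcases le_or_gt y m with hy | hy
  · rw [min_eq_left hy, min_eq_left (hτ.1.trans (hτ.2.trans hy)), min_eq_left (hτ.2.trans hy),
      max_eq_right hy, max_eq_right (hτ.1.trans (hτ.2.trans hy))]
    ring
  rcases le_or_gt m x with hx | hx
  · rw [min_eq_right hx, min_eq_right hy.le, max_eq_left hx, max_eq_left (hx.trans hτ.1),
      max_eq_left (hx.trans (hτ.1.trans hτ.2))]
    ring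
  · obtain rfl := hstrad hx hy
    rw [min_eq_left hx.le, min_eq_right hy.le, min_self, max_eq_right hx.le, max_eq_left hy.le,
      max_self]
    ring

end MinMax

lemma sum_range_mul_sub_eq_of_tag {f : ℝ → ℝ} {n : ℕ} {p τ : ℕ → ℝ} {τ₀ : ℝ}
    (h : ∀ k < n, p k ≠ p (k + 1) → τ k = τ₀) :
    ∑ k ∈ Finset.range n, f (τ k) * (p (k + 1) - p k) = f τ₀ * (p n - p 0) := by
  rw [← Finset.sum_range_sub p n, Finset.mul_sum]
  refine Finset.sum_congr rfl fun k hk => ?_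
  by_cases hp : p k = p (k + 1)
  · rw [hp, sub_self, mul_zero, mul_zero]
  · rw [h k (Finset.mem_range.mp hk) hp]

lemma exists_strictMono_tendsto_of_lt {a c : ℝ} (hac : a < c) :
    ∃ s : ℕ → ℝ, StrictMono s ∧ s 0 = a ∧ (∀ n, s n < c) ∧ Tendsto s atTop (𝓝 c) := by
  obtain ⟨t, ht, htac, htc⟩ := exists_seq_strictMono_tendsto' hac
  refine ⟨fun n => if n = 0 then a else t (n - 1), strictMono_nat_of_lt_succ fun n => ?_, rfl,
    fun n => ?_, (tendsto_add_atTop_iff_nat 1).mp (by simpa using htc)⟩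
  · rcases n with _ | n
    · simpa using (htac 0).1
    · simpa using ht n.lt_succ_self
  · dsimp only
    split_ifs
    · exact hac
    · exact (htac _).2

lemma exists_pos_forall_le_of_le_bound (g : ℕ → ℝ → ℝ) (hg : ∀ k x, 0 < g k x) (N : ℝ → ℕ) :
    ∃ δ : ℝ → ℝ, (∀ x, 0 < δ x) ∧ ∀ x, ∀ k ≤ N x, δ x ≤ g k x :=
  ⟨fun x => (Finset.range (N x + 1)).inf' Finset.nonempty_range_add_one (g · x),
    fun x => (Finset.lt_inf'_iff _).mpr fun k _ => hg k x,
    fun _ _ hk => Finset.inf'_le _ (Finset.mem_range_succ_iff.mpr hk)⟩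

namespace TaggedDiv1

variable {u v w : ℝ}

/-- Partition points indexed by `ℕ`, equal to `v` from index `n` on. -/
def pt (D : TaggedDiv1 u v) (k : ℕ) : ℝ := D.t ⟨min k D.n, by omega⟩

/-- Tags indexed by `ℕ`, with junk value `v` from index `n` on. -/
def tg (D : TaggedDiv1 u v) (k : ℕ) : ℝ := if h : k < D.n then D.tag ⟨k, h⟩ else v

section View

variable (D : TaggedDiv1 u v)

lemma pt_of_le {k : ℕ} (hk : k ≤ D.n) : D.pt k = D.t ⟨k, by omega⟩ := by
  simp only [pt, min_eq_left hk]

lemma pt_zero : D.pt 0 = u := by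
  rw [pt_of_le D (Nat.zero_le _)]; exact D.first

lemma pt_of_ge {k : ℕ} (hk : D.n ≤ k) : D.pt k = v := by
  simp only [pt, min_eq_right hk]; exact D.last

lemma monotone_pt : Monotone D.pt := fun _ _ h =>
  D.mono (Fin.mk_le_mk.mpr (min_le_min_right _ h))

lemma pt_mem (k : ℕ) : D.pt k ∈ Icc u v :=
  ⟨D.pt_zero.symm.trans_le (D.monotone_pt (Nat.zero_le k)),
    (D.mono (Fin.le_last _)).trans_eq D.last⟩

lemma tg_mem {k : ℕ} (hk : k < D.n) : D.tg k ∈ Icc (D.pt k) (D.pt (k + 1)) := by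
  rw [tg, dif_pos hk, pt_of_le D hk.le, pt_of_le D hk]
  exact D.tag_mem ⟨k, hk⟩

lemma tg_mem_Icc {k : ℕ} (hk : k < D.n) : D.tg k ∈ Icc u v :=
  ⟨(D.pt_mem k).1.trans (D.tg_mem hk).1, (D.tg_mem hk).2.trans (D.pt_mem _).2⟩

lemma riemannSum1_eq_sum_range (f : ℝ → ℝ) :
    riemannSum1 f D = ∑ k ∈ Finset.range D.n, f (D.tg k) * (D.pt (k + 1) - D.pt k) := by
  rw [riemannSum1, ← Fin.sum_univ_eq_sum_range]
  refine Finset.sum_congr rfl fun i _ => ?_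
  rw [tg, dif_pos i.isLt, pt_of_le D i.isLt, pt_of_le D i.isLt.le]
  rfl

theorem _root_.Compat1.Icc_pt_subset {D : TaggedDiv1 u v} {δ : ℝ → ℝ} (hD : Compat1 D δ) {k : ℕ}
    (hk : k < D.n) :
    Icc (D.pt k) (D.pt (k + 1)) ⊆ Ioo (D.tg k - δ (D.tg k)) (D.tg k + δ (D.tg k)) := by
  rw [tg, dif_pos hk, pt_of_le D hk.le, pt_of_le D hk]
  exact hD ⟨k, hk⟩

end View

def ofSeq (n : ℕ) (p τ : ℕ → ℝ) (hp : Monotone p) (h0 : p 0 = u) (hn : p n = v)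
    (hτ : ∀ k < n, τ k ∈ Icc (p k) (p (k + 1))) : TaggedDiv1 u v where
  n := n
  t i := p i
  tag i := τ i
  mono _ _ h := hp h
  first := h0
  last := hn
  tag_mem i := hτ i i.isLt

section OfSeq

variable {n : ℕ} {p τ : ℕ → ℝ} {hp : Monotone p} {h0 : p 0 = u} {hn : p n = v}
  {hτ : ∀ k < n, τ k ∈ Icc (p k) (p (k + 1))}

lemma riemannSum1_ofSeq (f : ℝ → ℝ) :
    riemannSum1 f (ofSeq n p τ hp h0 hn hτ) =
      ∑ k ∈ Finset.range n, f (τ k) * (p (k + 1) - p k) :=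
  Fin.sum_univ_eq_sum_range (fun k => f (τ k) * (p (k + 1) - p k)) n

lemma compat1_ofSeq {δ : ℝ → ℝ}
    (h : ∀ k < n, Icc (p k) (p (k + 1)) ⊆ Ioo (τ k - δ (τ k)) (τ k + δ (τ k))) :
    Compat1 (ofSeq n p τ hp h0 hn hτ) δ :=
  fun i => h i i.isLt

end OfSeq

theorem _root_.Compat1.mono {D : TaggedDiv1 u v} {δ δ' : ℝ → ℝ} (h : Compat1 D δ)
    (hle : ∀ x ∈ Icc u v, δ x ≤ δ' x) : Compat1 D δ' := by
  intro i
  have htag := D.tg_mem_Icc i.isLt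
  rw [tg, dif_pos i.isLt] at htag
  have := hle _ htag
  exact (h i).trans (Ioo_subset_Ioo (by linarith) (by linarith))

section Append

variable (D₁ : TaggedDiv1 u v) (D₂ : TaggedDiv1 v w)

/-- At each index one of the two summands is `v`, so this runs through the points of `D₁` and
then through those of `D₂`. -/
def appendPt (k : ℕ) : ℝ := D₁.pt k + D₂.pt (k - D₁.n) - v

def appendTg (k : ℕ) : ℝ := if k < D₁.n then D₁.tg k else D₂.tg (k - D₁.n)

lemma appendPt_of_le {k : ℕ} (hk : k ≤ D₁.n) : appendPt D₁ D₂ k = D₁.pt k := by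
  rw [appendPt, Nat.sub_eq_zero_of_le hk, pt_zero, add_sub_cancel_right]

lemma appendPt_add (j : ℕ) : appendPt D₁ D₂ (D₁.n + j) = D₂.pt j := by
  rw [appendPt, D₁.pt_of_ge (Nat.le_add_right _ _), Nat.add_sub_cancel_left, add_sub_cancel_left]

lemma appendTg_of_lt {k : ℕ} (hk : k < D₁.n) : appendTg D₁ D₂ k = D₁.tg k := if_pos hk

lemma appendTg_add (j : ℕ) : appendTg D₁ D₂ (D₁.n + j) = D₂.tg j := by
  rw [appendTg, if_neg (by omega), Nat.add_sub_cancel_left]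

lemma monotone_appendPt : Monotone (appendPt D₁ D₂) := fun i j h => by
  have := D₁.monotone_pt h
  have := D₂.monotone_pt (Nat.sub_le_sub_right h D₁.n)
  simp only [appendPt]
  linarith

lemma appendTg_mem {k : ℕ} (hk : k < D₁.n + D₂.n) :
    appendTg D₁ D₂ k ∈ Icc (appendPt D₁ D₂ k) (appendPt D₁ D₂ (k + 1)) := by
  rcases lt_or_ge k D₁.n with hk₁ | hk₁
  · rw [appendTg_of_lt _ _ hk₁, appendPt_of_le _ _ hk₁.le, appendPt_of_le _ _ hk₁]
    exact D₁.tg_mem hk₁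
  · obtain ⟨j, rfl⟩ := Nat.exists_eq_add_of_le hk₁
    rw [appendTg_add, appendPt_add, add_assoc, appendPt_add]
    exact D₂.tg_mem (by omega)

def append : TaggedDiv1 u w :=
  ofSeq (D₁.n + D₂.n) (appendPt D₁ D₂) (appendTg D₁ D₂) (monotone_appendPt D₁ D₂)
    (by rw [appendPt_of_le _ _ (Nat.zero_le _), pt_zero])
    (by rw [appendPt_add, pt_of_ge _ le_rfl]) (fun _ hk => appendTg_mem D₁ D₂ hk)

lemma riemannSum1_append (f : ℝ → ℝ) :
    riemannSum1 f (D₁.append D₂) = riemannSum1 f D₁ + riemannSum1 f D₂ := by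
  rw [append, riemannSum1_ofSeq, Finset.sum_range_add, riemannSum1_eq_sum_range,
    riemannSum1_eq_sum_range]
  congr 1
  · refine Finset.sum_congr rfl fun k hk => ?_
    rw [Finset.mem_range] at hk
    rw [appendTg_of_lt _ _ hk, appendPt_of_le _ _ hk.le, appendPt_of_le _ _ hk]
  · refine Finset.sum_congr rfl fun j _ => ?_
    rw [appendTg_add, appendPt_add, add_assoc, appendPt_add]

variable {D₁ D₂} in
theorem _root_.Compat1.append {δ : ℝ → ℝ} (h₁ : Compat1 D₁ δ) (h₂ : Compat1 D₂ δ) :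
    Compat1 (D₁.append D₂) δ := by
  refine compat1_ofSeq fun k hk => ?_
  rcases lt_or_ge k D₁.n with hk₁ | hk₁
  · rw [appendTg_of_lt _ _ hk₁, appendPt_of_le _ _ hk₁.le, appendPt_of_le _ _ hk₁]
    exact h₁.Icc_pt_subset hk₁
  · obtain ⟨j, rfl⟩ := Nat.exists_eq_add_of_le hk₁
    rw [appendTg_add, appendPt_add, add_assoc, appendPt_add]
    exact h₂.Icc_pt_subset (by omega)

end Append

def single {τ : ℝ} (huτ : u ≤ τ) (hτv : τ ≤ v) : TaggedDiv1 u v :=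
  ofSeq 1 (fun k => if k = 0 then u else v) (fun _ => τ)
    (fun i j h => by dsimp only; split_ifs <;> first | rfl | omega | exact huτ.trans hτv)
    rfl (if_neg one_ne_zero) (fun k hk => by simpa [Nat.lt_one_iff.mp hk] using ⟨huτ, hτv⟩)

lemma compat1_single {τ : ℝ} (huτ : u ≤ τ) (hτv : τ ≤ v) {δ : ℝ → ℝ}
    (h : Icc u v ⊆ Ioo (τ - δ τ) (τ + δ τ)) : Compat1 (single huτ hτv) δ :=
  compat1_ofSeq fun k hk => by simpa [Nat.lt_one_iff.mp hk] using h

def SplitsAt (D : TaggedDiv1 u v) (m : ℝ) : Prop :=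
  ∀ k < D.n, D.pt k < m → m < D.pt (k + 1) → D.tg k = m

section Split

variable (D : TaggedDiv1 u v) {m : ℝ} (hum : u ≤ m) (hmv : m ≤ v)

def splitLeft : TaggedDiv1 u m :=
  ofSeq D.n (fun k => min (D.pt k) m) (fun k => min (D.tg k) m)
    (D.monotone_pt.min monotone_const) (by rw [pt_zero, min_eq_left hum])
    (by rw [pt_of_ge _ le_rfl, min_eq_right hmv])
    (fun k hk => show min (D.tg k) m ∈ Icc (min (D.pt k) m) (min (D.pt (k + 1)) m) from
      ⟨min_le_min_right m (D.tg_mem hk).1, min_le_min_right m (D.tg_mem hk).2⟩)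

def splitRight : TaggedDiv1 m v :=
  ofSeq D.n (fun k => max (D.pt k) m) (fun k => max (D.tg k) m)
    (D.monotone_pt.max monotone_const) (by rw [pt_zero, max_eq_right hum])
    (by rw [pt_of_ge _ le_rfl, max_eq_left hmv])
    (fun k hk => show max (D.tg k) m ∈ Icc (max (D.pt k) m) (max (D.pt (k + 1)) m) from
      ⟨max_le_max_right m (D.tg_mem hk).1, max_le_max_right m (D.tg_mem hk).2⟩)

variable {D} {δ : ℝ → ℝ}

theorem _root_.Compat1.splitLeft (hD : Compat1 D δ) (hs : D.SplitsAt m) (hm : 0 < δ m) :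
    Compat1 (D.splitLeft hum hmv) δ :=
  compat1_ofSeq fun k hk => Icc_min_subset_Ioo (D.tg_mem hk) (hD.Icc_pt_subset hk) hm (hs k hk)

theorem _root_.Compat1.splitRight (hD : Compat1 D δ) (hs : D.SplitsAt m) (hm : 0 < δ m) :
    Compat1 (D.splitRight hum hmv) δ :=
  compat1_ofSeq fun k hk => Icc_max_subset_Ioo (D.tg_mem hk) (hD.Icc_pt_subset hk) hm (hs k hk)

theorem riemannSum1_splitLeft_add_splitRight (f : ℝ → ℝ) (hs : D.SplitsAt m) :
    riemannSum1 f (D.splitLeft hum hmv) + riemannSum1 f (D.splitRight hum hmv) =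
      riemannSum1 f D := by
  rw [splitLeft, splitRight, riemannSum1_ofSeq, riemannSum1_ofSeq, ← Finset.sum_add_distrib,
    riemannSum1_eq_sum_range]
  refine Finset.sum_congr rfl fun k hk => ?_
  rw [Finset.mem_range] at hk
  exact mul_sub_min_add_mul_sub_max f (D.tg_mem hk) (hs k hk)

end Split

lemma splitsAt_pt (D : TaggedDiv1 u v) (j : ℕ) : D.SplitsAt (D.pt j) := fun k _ h₁ h₂ => by
  have := D.monotone_pt.reflect_lt h₁
  have := D.monotone_pt.reflect_lt h₂
  omega

lemma splitsAt_of_le_abs_sub {D : TaggedDiv1 u v} {δ : ℝ → ℝ} {m : ℝ} (hD : Compat1 D δ)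
    (hsep : ∀ x ∈ Icc u v, x ≠ m → δ x ≤ |x - m|) : D.SplitsAt m := fun k hk h₁ h₂ => by
  by_contra hne
  have hm := hD.Icc_pt_subset hk ⟨h₁.le, h₂.le⟩
  have := hsep _ (D.tg_mem_Icc hk) hne
  have : |D.tg k - m| < δ (D.tg k) := abs_sub_lt_iff.mpr ⟨by linarith [hm.1], by linarith [hm.2]⟩
  linarith

lemma riemannSum1_same {u : ℝ} (f : ℝ → ℝ) (D : TaggedDiv1 u u) : riemannSum1 f D = 0 := by
  rw [riemannSum1_eq_sum_range]
  refine Finset.sum_eq_zero fun k _ => ?_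
  rw [le_antisymm (D.pt_mem k).2 (D.pt_mem k).1, le_antisymm (D.pt_mem (k + 1)).2 (D.pt_mem _).1,
    sub_self, mul_zero]

end TaggedDiv1

open TaggedDiv1

/-- **Cousin's lemma.** -/
theorem exists_compat1 {u v : ℝ} (huv : u ≤ v) {δ : ℝ → ℝ} (hδ : ∀ x ∈ Icc u v, 0 < δ x) :
    ∃ D : TaggedDiv1 u v, Compat1 D δ := by
  set S : Set ℝ := {x | x ∈ Icc u v ∧ ∃ D : TaggedDiv1 u x, Compat1 D δ}
  have hbdd : BddAbove S := ⟨v, fun x hx => hx.1.2⟩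
  have huS : u ∈ S := ⟨⟨le_rfl, huv⟩, single le_rfl le_rfl, compat1_single _ _ fun x hx => by
    have := hδ u ⟨le_rfl, huv⟩
    exact ⟨by linarith [hx.1], by linarith [hx.2]⟩⟩
  set s := sSup S
  have hus : u ≤ s := le_csSup hbdd huS
  have hsv : s ≤ v := csSup_le ⟨u, huS⟩ fun x hx => hx.1.2
  have hδs : 0 < δ s := hδ s ⟨hus, hsv⟩
  obtain ⟨x, hxS, hsx⟩ : ∃ x ∈ S, s - δ s < x := exists_lt_of_lt_csSup ⟨u, huS⟩ (by linarith)
  have hxs : x ≤ s := le_csSup hbdd hxS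
  obtain ⟨-, Dx, hDx⟩ := hxS
  -- one more interval `[x, y]` tagged at `s` reaches any `y ∈ [s, s + δ s)`
  have hext : ∀ y ≤ v, s ≤ y → y < s + δ s → y ∈ S := fun y hyv hsy hyδ =>
    ⟨⟨hus.trans hsy, hyv⟩, Dx.append (single hxs hsy), hDx.append (compat1_single _ _ fun z hz =>
      ⟨by linarith [hz.1], by linarith [hz.2]⟩)⟩
  rcases hsv.eq_or_lt with hsv' | hsv'
  · exact (hext v le_rfl hsv (by rw [← hsv']; linarith)).2
  · exfalso
    have hy := hext (min v (s + δ s / 2)) (min_le_left _ _) (le_min hsv (by linarith))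
      ((min_le_right _ _).trans_lt (by linarith))
    have := le_csSup hbdd hy
    have := lt_min hsv' (by linarith : s < s + δ s / 2)
    linarith

theorem hasHK1_same (f : ℝ → ℝ) (u : ℝ) : HasHK1 f u u 0 := fun ε hε =>
  ⟨fun _ => 1, fun _ _ => one_pos, fun D _ => by rwa [riemannSum1_same, sub_zero, abs_zero]⟩

section SaksHenstock

variable {f δ : ℝ → ℝ} {u v w A B ε : ℝ}

theorem abs_riemannSum1_sub_le_of_hasHK1_right (hB : HasHK1 f w v B) (hwv : w ≤ v)
    (hδ : ∀ x ∈ Icc w v, 0 < δ x)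
    (hε : ∀ D : TaggedDiv1 u v, Compat1 D δ → |riemannSum1 f D - (A + B)| < ε)
    {Q : TaggedDiv1 u w} (hQ : Compat1 Q δ) : |riemannSum1 f Q - A| ≤ ε := by
  refine le_of_forall_pos_lt_add fun η hη => ?_
  obtain ⟨δ', hδ'pos, hδ'⟩ := hB η hη
  obtain ⟨E, hE⟩ := exists_compat1 hwv (δ := fun x => min (δ x) (δ' x))
    fun x hx => lt_min (hδ x hx) (hδ'pos x hx)
  have hQE := hε _ (hQ.append (hE.mono fun x _ => min_le_left _ _))
  have hE' := hδ' E (hE.mono fun x _ => min_le_right _ _)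
  rw [riemannSum1_append] at hQE
  calc |riemannSum1 f Q - A|
      = |(riemannSum1 f Q + riemannSum1 f E - (A + B)) - (riemannSum1 f E - B)| := by ring_nf
    _ ≤ |riemannSum1 f Q + riemannSum1 f E - (A + B)| + |riemannSum1 f E - B| := abs_sub _ _
    _ < ε + η := add_lt_add hQE hE'

theorem abs_riemannSum1_sub_le_of_hasHK1_left (hA : HasHK1 f u w A) (huw : u ≤ w)
    (hδ : ∀ x ∈ Icc u w, 0 < δ x)
    (hε : ∀ D : TaggedDiv1 u v, Compat1 D δ → |riemannSum1 f D - (A + B)| < ε)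
    {Q : TaggedDiv1 w v} (hQ : Compat1 Q δ) : |riemannSum1 f Q - B| ≤ ε := by
  refine le_of_forall_pos_lt_add fun η hη => ?_
  obtain ⟨δ', hδ'pos, hδ'⟩ := hA η hη
  obtain ⟨P, hP⟩ := exists_compat1 huw (δ := fun x => min (δ x) (δ' x))
    fun x hx => lt_min (hδ x hx) (hδ'pos x hx)
  have hPQ := hε _ ((hP.mono fun x _ => min_le_left _ _).append hQ)
  have hP' := hδ' P (hP.mono fun x _ => min_le_right _ _)
  rw [riemannSum1_append] at hPQ
  calc |riemannSum1 f Q - B|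
      = |(riemannSum1 f P + riemannSum1 f Q - (A + B)) - (riemannSum1 f P - A)| := by ring_nf
    _ ≤ |riemannSum1 f P + riemannSum1 f Q - (A + B)| + |riemannSum1 f P - A| := abs_sub _ _
    _ < ε + η := add_lt_add hPQ hP'

end SaksHenstock

theorem HasHK1.sub {f : ℝ → ℝ} {a x y A B : ℝ} (hA : HasHK1 f a x A) (hB : HasHK1 f a y B)
    (hax : a ≤ x) (hxy : x ≤ y) : HasHK1 f x y (B - A) := by
  intro ε hε
  obtain ⟨δ, hδpos, hδ⟩ := hB (ε / 2) (half_pos hε)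
  refine ⟨δ, fun z hz => hδpos z ⟨hax.trans hz.1, hz.2⟩, fun Q hQ => ?_⟩
  have := abs_riemannSum1_sub_le_of_hasHK1_left (B := B - A) hA hax
    (fun z hz => hδpos z ⟨hz.1, hz.2.trans hxy⟩)
    (fun D hD => by rw [add_sub_cancel]; exact hδ D hD) hQ
  linarith

theorem exists_gauge_abs_riemannSum1_sub_le {f Φ : ℝ → ℝ} {u v ε : ℝ} (huv : u ≤ v)
    (hε : 0 < ε) (hΦ : ∀ x y, u ≤ x → x ≤ y → y ≤ v → HasHK1 f x y (Φ y - Φ x)) :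
    ∃ δ : ℝ → ℝ, (∀ x ∈ Icc u v, 0 < δ x) ∧
      ∀ w ∈ Icc u v, ∀ Q : TaggedDiv1 u w, Compat1 Q δ →
        |riemannSum1 f Q - (Φ w - Φ u)| ≤ ε := by
  obtain ⟨δ, hδpos, hδ⟩ := hΦ u v le_rfl huv le_rfl ε hε
  refine ⟨δ, hδpos, fun w hw Q hQ => abs_riemannSum1_sub_le_of_hasHK1_right
    (hΦ w v hw.1 hw.2 le_rfl) hw.2 (fun x hx => hδpos x ⟨hw.1.trans hx.1, hx.2⟩)
    (fun D hD => by rw [sub_add_sub_cancel']; exact hδ D hD) hQ⟩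

theorem exists_riemannSum1_eq_add_last {f δ : ℝ → ℝ} {u v : ℝ} (huv : u < v)
    (hpos : ∀ x ∈ Icc u v, 0 < δ x) (hreach : ∀ x ∈ Ico u v, x + δ x ≤ v)
    {D : TaggedDiv1 u v} (hD : Compat1 D δ) :
    ∃ b ∈ Ico u v, v - δ v < b ∧ ∃ D' : TaggedDiv1 u b,
      Compat1 D' δ ∧ riemannSum1 f D = riemannSum1 f D' + f v * (v - b) := by
  classical
  set j := Nat.findGreatest (fun k => D.pt k < v) D.n
  have hj : D.pt j < v :=
    Nat.findGreatest_spec (P := fun k => D.pt k < v) (Nat.zero_le _) (by rwa [pt_zero])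
  have hafter : ∀ k, j < k → D.pt k = v := fun k hk => by
    rcases le_or_gt k D.n with hkn | hkn
    · exact (D.pt_mem k).2.eq_or_lt.resolve_right (Nat.findGreatest_is_greatest hk hkn)
    · exact D.pt_of_ge hkn.le
  have hjn : j < D.n := by
    by_contra! h
    exact hj.ne (D.pt_of_ge h)
  have htag : ∀ k < D.n, D.pt (k + 1) = v → D.tg k = v := fun k hk hkv => by
    by_contra hne
    have hτ := D.tg_mem_Icc hk
    have := hreach _ ⟨hτ.1, hτ.2.lt_of_ne hne⟩
    have := (hD.Icc_pt_subset hk ⟨(D.pt_mem k).2, hkv.ge⟩).2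
    linarith
  have hjv := hafter (j + 1) (lt_add_one j)
  set b := D.pt j
  have hub : u ≤ b := (D.pt_mem j).1
  refine ⟨b, ⟨hub, hj⟩, ?_, D.splitLeft hub hj.le,
    hD.splitLeft _ _ (D.splitsAt_pt j) (hpos b ⟨hub, hj.le⟩), ?_⟩
  · have := (hD.Icc_pt_subset hjn ⟨le_rfl, D.monotone_pt j.le_succ⟩).1
    rwa [htag j hjn hjv] at this
  · have hlast : ∀ k < D.n, max (D.pt k) b ≠ max (D.pt (k + 1)) b → max (D.tg k) b = v := by
      intro k hk hne
      have hbk : b < D.pt (k + 1) := by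
        by_contra! h
        exact hne (by rw [max_eq_right h, max_eq_right ((D.monotone_pt k.le_succ).trans h)])
      rw [htag k hk (hafter _ (D.monotone_pt.reflect_lt hbk)), max_eq_left hj.le]
    rw [← riemannSum1_splitLeft_add_splitRight hub hj.le f (D.splitsAt_pt j)]
    congr 1
    calc riemannSum1 f (D.splitRight hub hj.le)
        = ∑ k ∈ Finset.range D.n, f (max (D.tg k) b) * (max (D.pt (k + 1)) b - max (D.pt k) b) :=
          riemannSum1_ofSeq f
      _ = f v * (max (D.pt D.n) b - max (D.pt 0) b) := sum_range_mul_sub_eq_of_tag hlast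
      _ = f v * (v - b) := by rw [pt_of_ge _ le_rfl, pt_zero, max_eq_left hj.le, max_eq_right hub]

theorem exists_gauge_of_grid {s : ℕ → ℝ} {c : ℝ} (hs : StrictMono s) (hsc : ∀ n, s n < c)
    (hlim : Tendsto s atTop (𝓝 c)) {G : ℕ → ℝ → ℝ}
    (hG : ∀ k, ∀ x ∈ Icc (s k) (s (k + 1)), 0 < G k x) :
    ∃ δ : ℝ → ℝ, (∀ x, 0 < δ x) ∧ (∀ x < c, ∀ k, x ≠ s k → δ x ≤ |x - s k|) ∧
      (∀ k, ∀ x ∈ Icc (s k) (s (k + 1)), δ x ≤ G k x) ∧ ∀ x < c, x + δ x ≤ c := by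
  classical
  have hN : ∀ x, ∃ n, x < c → x < s n := fun x => by
    by_cases hx : x < c
    · obtain ⟨n, hn⟩ := (hlim.eventually (lt_mem_nhds hx)).exists
      exact ⟨n, fun _ => hn⟩
    · exact ⟨0, fun h => absurd h hx⟩
  choose N hN using hN
  obtain ⟨δ, hδpos, hδ⟩ := exists_pos_forall_le_of_le_bound
    (fun k x => min (if x ∈ Icc (s k) (s (k + 1)) then G k x else 1)
      (if x = s k then 1 else |x - s k|))
    (fun k x => lt_min (by split_ifs with h; exacts [hG k x h, one_pos])
      (by split_ifs with h; exacts [one_pos, abs_pos.mpr (sub_ne_zero.mpr h)])) N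
  have hsep : ∀ x < c, ∀ k, x ≠ s k → δ x ≤ |x - s k| := fun x hx k hxk => by
    have hxN : x < s (N x) := hN x hx
    rcases le_or_gt k (N x) with hk | hk
    · simpa [hxk] using (hδ x k hk).trans (min_le_right _ _)
    · -- grid points beyond `s (N x)` are farther away than `s (N x)`
      have h := (hδ x (N x) le_rfl).trans (min_le_right _ _)
      rw [if_neg hxN.ne, abs_of_neg (sub_neg.mpr hxN)] at h
      rw [abs_of_neg (sub_neg.mpr (hxN.trans (hs hk)))]
      linarith [hs hk]
  refine ⟨δ, hδpos, hsep, fun k x hx => ?_, fun x hx => ?_⟩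
  · have hk : k ≤ N x := (hs.lt_iff_lt.mp (hx.1.trans_lt (hN x (hx.2.trans_lt (hsc _))))).le
    simpa [hx] using (hδ x k hk).trans (min_le_left _ _)
  · have hxN : x < s (N x) := hN x hx
    have := hsep x hx (N x) hxN.ne
    rw [abs_of_neg (sub_neg.mpr hxN)] at this
    linarith [hsc (N x)]

theorem abs_riemannSum1_sub_le_of_bands {f δ Φ : ℝ → ℝ} {s : ℕ → ℝ} {c η : ℝ}
    (hs : Monotone s) (hsc : ∀ n, s n < c) (hη : 0 ≤ η) (hpos : ∀ k, 0 < δ (s k))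
    (hsep : ∀ x < c, ∀ k, x ≠ s k → δ x ≤ |x - s k|)
    (hband : ∀ k, ∀ w ∈ Icc (s k) (s (k + 1)), ∀ Q : TaggedDiv1 (s k) w, Compat1 Q δ →
      |riemannSum1 f Q - (Φ w - Φ (s k))| ≤ η / 2 ^ (k + 1))
    (m k : ℕ) {w : ℝ} (hkw : s k ≤ w) (hw : w ≤ s (k + m)) {Q : TaggedDiv1 (s k) w}
    (hQ : Compat1 Q δ) : |riemannSum1 f Q - (Φ w - Φ (s k))| ≤ η / 2 ^ k := by
  have hhalf : ∀ k : ℕ, η / 2 ^ (k + 1) ≤ η / 2 ^ k := fun k =>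
    div_le_div_of_nonneg_left hη (by positivity) (pow_le_pow_right₀ one_le_two k.le_succ)
  induction m generalizing k with
  | zero => exact (hband k w ⟨hkw, hw.trans (hs k.le_succ)⟩ Q hQ).trans (hhalf k)
  | succ m ih =>
    rcases le_or_gt w (s (k + 1)) with hw₁ | hw₁
    · exact (hband k w ⟨hkw, hw₁⟩ Q hQ).trans (hhalf k)
    have hsplit : Q.SplitsAt (s (k + 1)) := splitsAt_of_le_abs_sub hQ fun x hx hne =>
      hsep x (hx.2.trans_lt (hw.trans_lt (hsc _))) _ hne
    have h₁ := hband k (s (k + 1)) ⟨hs k.le_succ, le_rfl⟩ _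
      (hQ.splitLeft (hs k.le_succ) hw₁.le hsplit (hpos _))
    have h₂ := ih (k + 1) hw₁.le (by rwa [Nat.add_right_comm])
      (hQ.splitRight (hs k.le_succ) hw₁.le hsplit (hpos _))
    rw [← riemannSum1_splitLeft_add_splitRight (hs k.le_succ) hw₁.le f hsplit]
    calc _ = |(riemannSum1 f (Q.splitLeft (hs k.le_succ) hw₁.le) - (Φ (s (k + 1)) - Φ (s k))) +
          (riemannSum1 f (Q.splitRight (hs k.le_succ) hw₁.le) - (Φ w - Φ (s (k + 1))))| := by
          ring_nf
      _ ≤ η / 2 ^ (k + 1) + η / 2 ^ (k + 1) := (abs_add_le _ _).trans (add_le_add h₁ h₂)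
      _ = η / 2 ^ k := by rw [pow_succ]; ring

theorem exists_gauge_abs_riemannSum1_sub_le_of_lt {f Φ : ℝ → ℝ} {a c η : ℝ} (hac : a < c)
    (hη : 0 < η) (hΦ : ∀ x y, a ≤ x → x ≤ y → y < c → HasHK1 f x y (Φ y - Φ x)) :
    ∃ δ : ℝ → ℝ, (∀ x, 0 < δ x) ∧ (∀ x < c, x + δ x ≤ c) ∧
      ∀ b ∈ Ico a c, ∀ D : TaggedDiv1 a b, Compat1 D δ →
        |riemannSum1 f D - (Φ b - Φ a)| ≤ η := by
  obtain ⟨s, hs, rfl, hsc, hslim⟩ := exists_strictMono_tendsto_of_lt hac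
  have hbands : ∀ k, ∃ G : ℝ → ℝ, (∀ x ∈ Icc (s k) (s (k + 1)), 0 < G x) ∧
      ∀ w ∈ Icc (s k) (s (k + 1)), ∀ Q : TaggedDiv1 (s k) w, Compat1 Q G →
        |riemannSum1 f Q - (Φ w - Φ (s k))| ≤ η / 2 ^ (k + 1) := fun k =>
    exists_gauge_abs_riemannSum1_sub_le (hs k.lt_succ_self).le (by positivity)
      fun x y hx hxy hy => hΦ x y ((hs.monotone k.zero_le).trans hx) hxy (hy.trans_lt (hsc _))
  choose G hGpos hG using hbands
  obtain ⟨δ, hδpos, hsep, hδG, hreach⟩ := exists_gauge_of_grid hs hsc hslim hGpos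
  refine ⟨δ, hδpos, hreach, fun b ⟨hab, hbc⟩ D hD => ?_⟩
  obtain ⟨m, hm⟩ := (hslim.eventually (lt_mem_nhds hbc)).exists
  simpa using abs_riemannSum1_sub_le_of_bands hs.monotone hsc hη.le (fun _ => hδpos _) hsep
    (fun k w hw Q hQ => hG k w hw Q (hQ.mono fun x hx => hδG k x ⟨hx.1, hx.2.trans hw.2⟩))
    m 0 hab (by simpa using hm.le) hD

lemma abs_mul_le_of_le_div {y t e : ℝ} (he : 0 ≤ e) (ht : 0 ≤ t) (hte : t ≤ e / (|y| + 1)) :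
    |y * t| ≤ e := by
  rw [abs_mul, abs_of_nonneg ht]
  calc |y| * t ≤ |y| * (e / (|y| + 1)) := by gcongr
    _ ≤ e := by
      rw [mul_div_assoc', div_le_iff₀ (by positivity)]
      nlinarith [abs_nonneg y]

theorem hasHK1_sub_of_tendsto {f Φ : ℝ → ℝ} {a c L : ℝ} (hac : a < c)
    (hΦ : ∀ x y, a ≤ x → x ≤ y → y < c → HasHK1 f x y (Φ y - Φ x))
    (hlim : Tendsto Φ (𝓝[<] c) (𝓝 L)) : HasHK1 f a c (L - Φ a) := by
  intro ε hε
  obtain ⟨δ₀, hδ₀pos, hreach, hδ₀⟩ :=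
    exists_gauge_abs_riemannSum1_sub_le_of_lt hac (by positivity : 0 < ε / 4) hΦ
  obtain ⟨r, hr, hrL⟩ := Metric.tendsto_nhdsWithin_nhds.mp hlim (ε / 4) (by positivity)
  set ρ := min r (ε / 4 / (|f c| + 1))
  obtain ⟨δ, hδ, hδc⟩ : ∃ δ : ℝ → ℝ, (∀ x < c, δ x = δ₀ x) ∧ δ c = ρ :=
    ⟨Function.update δ₀ c ρ, fun x hx => Function.update_of_ne hx.ne _ _,
      Function.update_self _ _ _⟩
  have hδpos : ∀ x ∈ Icc a c, 0 < δ x := fun x hx => by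
    rcases hx.2.lt_or_eq with hxc | rfl
    · rw [hδ x hxc]; exact hδ₀pos x
    · rw [hδc]; exact lt_min hr (by positivity)
  refine ⟨δ, hδpos, fun D hD => ?_⟩
  obtain ⟨b, ⟨hab, hbc⟩, hcb, D', hD', hsum⟩ :=
    exists_riemannSum1_eq_add_last (f := f) hac hδpos (fun x hx => hδ x hx.2 ▸ hreach x hx.2) hD
  rw [hδc] at hcb
  have h₁ := hδ₀ b ⟨hab, hbc⟩ D' (hD'.mono fun x hx => (hδ x (hx.2.trans_lt hbc)).le)
  have h₂ : |Φ b - L| < ε / 4 := by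
    rw [← Real.dist_eq]
    refine hrL hbc ?_
    rw [Real.dist_eq, abs_of_neg (by linarith)]
    linarith [min_le_left r (ε / 4 / (|f c| + 1))]
  have h₃ : |f c * (c - b)| ≤ ε / 4 := abs_mul_le_of_le_div (by positivity) (by linarith)
    (by linarith [min_le_right r (ε / 4 / (|f c| + 1))])
  rw [hsum]
  calc |riemannSum1 f D' + f c * (c - b) - (L - Φ a)|
      = |(riemannSum1 f D' - (Φ b - Φ a)) + (Φ b - L) + f c * (c - b)| := by ring_nf
    _ ≤ |riemannSum1 f D' - (Φ b - Φ a)| + |Φ b - L| + |f c * (c - b)| := abs_add_three _ _ _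
    _ < ε := by linarith

/-- **The Cauchy extension.** If `f` is HK-integrable on `[a,b]` for every `a < b < c`, with
integral `F b`, and `F b → L` as `b → c⁻`, then `f` is HK-integrable on `[a,c]` with
integral `L`. -/
theorem cauchy_extension (a c : ℝ) (hac : a < c) (f F : ℝ → ℝ) (L : ℝ)
    (hint : ∀ b, a < b → b < c → HasHK1 f a b (F b))
    (hlim : Filter.Tendsto F (nhdsWithin c (Set.Iio c)) (nhds L)) :
    HasHK1 f a c L := by
  obtain ⟨Φ, hΦa, hΦF⟩ : ∃ Φ : ℝ → ℝ, Φ a = 0 ∧ ∀ y ≠ a, Φ y = F y :=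
    ⟨Function.update F a 0, Function.update_self _ _ _, fun y hy => Function.update_of_ne hy _ _⟩
  have hΦ : ∀ y, a ≤ y → y < c → HasHK1 f a y (Φ y) := fun y hay hyc => by
    rcases hay.eq_or_lt with rfl | hay
    · rw [hΦa]; exact hasHK1_same f _
    · rw [hΦF y hay.ne']; exact hint y hay hyc
  have hΦlim : Tendsto Φ (𝓝[<] c) (𝓝 L) := hlim.congr' <| by
    filter_upwards [Ioo_mem_nhdsLT hac] with x hx using (hΦF x hx.1.ne').symm
  simpa [hΦa] using hasHK1_sub_of_tendsto hac
    (fun x y hax hxy hyc => (hΦ x hax (hxy.trans_lt hyc)).sub (hΦ y (hax.trans hxy) hyc) hax hxy)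
    hΦlim
end
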